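/- arXiv:2605.30929 — 4 statements merged into one kernel-verified Lean document; each statement's English description precedes it below -/
import Mathlib

section
/- Let n, m ≥ 2 with (n,m) ≠ (2,2). For C = (c_{ij}) ∈ M_{n×m}(L) write h(C) = τ_n·σ(C) − C·τ_m^{m−1}. Let α_i = v(unique nonzero entry of row i of τ_n) (so α_i = 0 for i < n and α_n = 1) and β_j = v(unique nonzero entry of column j of τ_m^{m−1}) (so β_j = 1 for j ≤ m−1 and β_m = 0). Define S = {C ∈ M_{n×m}(L) : for all (i,j), the entry h(C)_{ij} is 0 or has valuation ≥ min{α_i, β_j}}. Then S is an additive subgroup of M_{n×m}(L) containing M_{n×m}(𝒪_L), every C ∈ S satisfies c_{1,m} ∈ t^{−1}𝒪_L, and the map C ↦ c_{1,m} + 𝒪_L induces a bijection from S / M_{n×m}(𝒪_L) onto t^{−1}𝒪_L/𝒪_L. -/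
open Pointwise

/-- The canonical superbasic element `τ_r`: the `r×r` matrix with `t` in position `(r,1)`,
`1` on the superdiagonal, and `0` elsewhere (1-indexed). -/
def tau {L : Type*} [Field L] (t : L) (r : ℕ) : Matrix (Fin r) (Fin r) L :=
  Matrix.of fun i j =>
    if (i : ℕ) + 1 = (j : ℕ) then 1 else if (i : ℕ) = r - 1 ∧ (j : ℕ) = 0 then t else 0

section Aux
variable {L : Type*} [Field L] (t : L)

lemma tau_mul_apply {p q : ℕ} (hp : 2 ≤ p) (D : Matrix (Fin p) (Fin q) L) (i : Fin p) (j : Fin q) :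
    (tau t p * D) i j = if (i : ℕ) = p - 1 then t * D ⟨0, by omega⟩ j
      else D ⟨((i : ℕ) + 1) % p, Nat.mod_lt _ (by omega)⟩ j := by
  rw [Matrix.mul_apply]
  by_cases hi : (i : ℕ) = p - 1
  · rw [if_pos hi, Finset.sum_eq_single (⟨0, by omega⟩ : Fin p)]
    · simp only [tau, Matrix.of_apply]
      rw [if_neg (by omega), if_pos (by exact ⟨hi, by simp⟩)]
    · intro b _ hb
      simp only [tau, Matrix.of_apply]
      rw [if_neg (by have := b.isLt; omega), if_neg (by
        rintro ⟨-, h2⟩; exact hb (Fin.ext h2))]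
      ring
    · simp
  · rw [if_neg hi]
    have hlt : (i : ℕ) + 1 < p := by have := i.isLt; omega
    rw [Finset.sum_eq_single (⟨((i : ℕ) + 1) % p, Nat.mod_lt _ (by omega)⟩ : Fin p)]
    · simp only [tau, Matrix.of_apply]
      rw [if_pos (by simp [Nat.mod_eq_of_lt hlt]), one_mul]
    · intro b _ hb
      simp only [tau, Matrix.of_apply]
      rw [if_neg (by intro h; exact hb (Fin.ext (by simp [← h, Nat.mod_eq_of_lt hlt]))),
        if_neg (by rintro ⟨h1, -⟩; exact hi h1)]
      ring
    · simp

lemma mul_tau_apply {p q : ℕ} (hq : 2 ≤ q) (D : Matrix (Fin p) (Fin q) L) (i : Fin p) (j : Fin q) :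
    (D * tau t q) i j = if (j : ℕ) = 0 then t * D i ⟨q - 1, by omega⟩
      else D i ⟨(j : ℕ) - 1, by have := j.isLt; omega⟩ := by
  rw [Matrix.mul_apply]
  by_cases hj : (j : ℕ) = 0
  · rw [if_pos hj, Finset.sum_eq_single (⟨q - 1, by omega⟩ : Fin q)]
    · simp only [tau, Matrix.of_apply]
      rw [if_neg (by omega), if_pos (by exact ⟨by simp, hj⟩)]; ring
    · intro b _ hb
      simp only [tau, Matrix.of_apply]
      rw [if_neg (by omega), if_neg (by rintro ⟨h1, -⟩; exact hb (Fin.ext h1))]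
      ring
    · simp
  · rw [if_neg hj, Finset.sum_eq_single (⟨(j : ℕ) - 1, by have := j.isLt; omega⟩ : Fin q)]
    · simp only [tau, Matrix.of_apply]
      rw [if_pos (show ((j:ℕ)-1)+1 = (j:ℕ) by omega)]; ring
    · intro b _ hb
      simp only [tau, Matrix.of_apply]
      rw [if_neg (fun h => hb (Fin.ext (show (b:ℕ) = (j:ℕ)-1 by omega))),
        if_neg (by rintro ⟨-, h2⟩; exact hj h2)]
      ring
    · simp

lemma mul_tau_pow {p q : ℕ} (hq : 2 ≤ q) (k : ℕ) (hk : k < q) (D : Matrix (Fin p) (Fin q) L)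
    (i : Fin p) (j : Fin q) :
    (D * tau t q ^ k) i j = if k ≤ (j : ℕ) then D i ⟨(j : ℕ) - k, by have := j.isLt; omega⟩
      else t * D i ⟨((j : ℕ) + q - k) % q, Nat.mod_lt _ (by omega)⟩ := by
  induction k generalizing j with
  | zero => simp
  | succ k ih =>
      have hk' : k < q := by omega
      have hjq := j.isLt
      rw [pow_succ, ← Matrix.mul_assoc, mul_tau_apply t hq]
      by_cases hj : (j : ℕ) = 0
      · rw [if_pos hj, ih hk', if_pos (show k ≤ q-1 by omega), if_neg (by omega)]
        exact congrArg _ (congrArg _ (Fin.ext (show q-1-k = ((j:ℕ)+q-(k+1)) % q by rw [Nat.mod_eq_of_lt (by omega)]; omega)))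
      · rw [if_neg hj, ih hk']
        by_cases h2 : k + 1 ≤ (j : ℕ)
        · rw [if_pos (show k ≤ (j:ℕ)-1 by omega), if_pos h2]
          exact congrArg _ (Fin.ext (show (j:ℕ)-1-k = (j:ℕ)-(k+1) by omega))
        · rw [if_neg (show ¬ k ≤ (j:ℕ)-1 by omega), if_neg h2]
          exact congrArg _ (congrArg _ (Fin.ext
            (show ((j:ℕ)-1+q-k) % q = ((j:ℕ)+q-(k+1)) % q by rw [Nat.mod_eq_of_lt (by omega), Nat.mod_eq_of_lt (by omega)]; omega)))

end Aux

set_option maxHeartbeats 1600000 in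
/-- The mixed Drinfeld two-block configuration `(τ_n, τ_m^{m−1})` for
`n, m ≥ 2`, `(n,m) ≠ (2,2)`: with `α_i = 0 (i < n)`, `α_n = 1` and `β_j = 1 (j ≤ m−1)`,
`β_m = 0`, the set `S = {C : each entry of τ_n σ(C) − C τ_m^{m−1} is 0 or has valuation
≥ min{α_i,β_j}}` is an additive subgroup of `M_{n×m}(L)` containing `M_{n×m}(𝒪_L)`, every
`C ∈ S` has `c_{1,m} ∈ t⁻¹𝒪_L`, and `C ↦ c_{1,m} + 𝒪_L` induces a bijection
`S / M_{n×m}(𝒪_L) ≃ t⁻¹𝒪_L/𝒪_L`. -/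
theorem stmt_12 {L : Type*} [Field L] (v : L → ℤ) (t : L)
    (hv_mul : ∀ x y : L, x ≠ 0 → y ≠ 0 → v (x * y) = v x + v y)
    (hv_add : ∀ x y : L, x ≠ 0 → y ≠ 0 → x + y ≠ 0 → min (v x) (v y) ≤ v (x + y))
    (hv_surj : ∀ n : ℤ, ∃ x : L, x ≠ 0 ∧ v x = n)
    (ht0 : t ≠ 0) (ht1 : v t = 1)
    (O : Subring L) (hO : ∀ x : L, x ∈ O ↔ x = 0 ∨ 0 ≤ v x)
    (σ : L ≃+* L) (hσt : σ t = t) (hσv : ∀ x : L, x ≠ 0 → v (σ x) = v x)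
    (n m : ℕ) (hn : 2 ≤ n) (hm : 2 ≤ m) (hnm : ¬(n = 2 ∧ m = 2))
    (α : Fin n → ℤ) (hα : ∀ i, α i = if (i : ℕ) = n - 1 then 1 else 0)
    (β : Fin m → ℤ) (hβ : ∀ j, β j = if (j : ℕ) = m - 1 then 0 else 1)
    (S : Set (Matrix (Fin n) (Fin m) L))
    (hS : S = {C | ∀ i j,
        (tau t n * C.map ⇑σ - C * tau t m ^ (m - 1)) i j = 0 ∨
          min (α i) (β j) ≤ v ((tau t n * C.map ⇑σ - C * tau t m ^ (m - 1)) i j)}) :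
    -- `S` is an additive subgroup of `M_{n×m}(L)` containing `M_{n×m}(𝒪_L)`
    (0 ∈ S) ∧
    (∀ C₁ ∈ S, ∀ C₂ ∈ S, C₁ + C₂ ∈ S) ∧
    (∀ C ∈ S, -C ∈ S) ∧
    (∀ C : Matrix (Fin n) (Fin m) L, (∀ i j, C i j ∈ O) → C ∈ S) ∧
    -- every `C ∈ S` has `c_{1,m} ∈ t⁻¹𝒪_L`
    (∀ C ∈ S, C (⟨0, by omega⟩ : Fin n) (⟨m - 1, by omega⟩ : Fin m) ∈ t⁻¹ • (O : Set L)) ∧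
    -- the map `C ↦ c_{1,m} + 𝒪_L` separates points of `S` exactly modulo `M_{n×m}(𝒪_L)`
    (∀ C₁ ∈ S, ∀ C₂ ∈ S,
      ((QuotientAddGroup.mk (C₁ (⟨0, by omega⟩ : Fin n) (⟨m - 1, by omega⟩ : Fin m)) :
            L ⧸ O.toAddSubgroup) =
          QuotientAddGroup.mk (C₂ (⟨0, by omega⟩ : Fin n) (⟨m - 1, by omega⟩ : Fin m))
        ↔ ∀ i j, (C₁ - C₂) i j ∈ O)) ∧
    -- and hits every element of `t⁻¹𝒪_L/𝒪_L`
    (∀ y : L ⧸ O.toAddSubgroup,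
      (∃ c ∈ t⁻¹ • (O : Set L), QuotientAddGroup.mk c = y) →
      ∃ C ∈ S,
        (QuotientAddGroup.mk (C (⟨0, by omega⟩ : Fin n) (⟨m - 1, by omega⟩ : Fin m)) :
            L ⧸ O.toAddSubgroup) = y) := by
  classical
  have hn0 : 0 < n := by omega
  have hm0 : 0 < m := by omega
  -- entry formula
  have hE : ∀ (C : Matrix (Fin n) (Fin m) L) (i : Fin n) (j : Fin m),
      (tau t n * C.map ⇑σ - C * tau t m ^ (m-1)) i j
        = (if (i:ℕ) = n-1 then t * σ (C ⟨0, hn0⟩ j)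
            else σ (C ⟨((i:ℕ)+1)%n, Nat.mod_lt _ hn0⟩ j))
          - (if (j:ℕ) = m-1 then C i ⟨0, hm0⟩
            else t * C i ⟨((j:ℕ)+1)%m, Nat.mod_lt _ hm0⟩) := by
    intro C i j
    have hL : (tau t n * C.map ⇑σ) i j
        = (if (i:ℕ) = n-1 then t * σ (C ⟨0, hn0⟩ j)
            else σ (C ⟨((i:ℕ)+1)%n, Nat.mod_lt _ hn0⟩ j)) := by
      rw [tau_mul_apply t hn]
      split <;> simp [Matrix.map_apply]
    have hR : (C * tau t m ^ (m-1)) i j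
        = (if (j:ℕ) = m-1 then C i ⟨0, hm0⟩
            else t * C i ⟨((j:ℕ)+1)%m, Nat.mod_lt _ hm0⟩) := by
      rw [mul_tau_pow t hm (m-1) (by omega)]
      by_cases hj : (j:ℕ) = m-1
      · rw [if_pos (by omega), if_pos hj]
        exact congrArg _ (Fin.ext (show (j:ℕ)-(m-1) = 0 by omega))
      · rw [if_neg (by have := j.isLt; omega), if_neg hj]
        exact congrArg _ (congrArg _ (Fin.ext
          (show ((j:ℕ)+m-(m-1))%m = ((j:ℕ)+1)%m by congr 1; omega)))
    rw [Matrix.sub_apply, hL, hR]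
  have htO : ∀ x : L, (t*x = 0 ∨ (1:ℤ) ≤ v (t*x)) ↔ x ∈ O := by
    intro x
    rw [hO]
    by_cases hx : x = 0
    · simp [hx]
    · rw [hv_mul t x ht0 hx, ht1]
      constructor
      · rintro (h | h)
        · exact absurd h (mul_ne_zero ht0 hx)
        · right; omega
      · rintro (h | h)
        · exact absurd h hx
        · right; omega
  -- membership characterization
  have hmem : ∀ C : Matrix (Fin n) (Fin m) L, C ∈ S ↔
      ((∀ (i : Fin n) (j : Fin m), (i:ℕ) ≠ n-1 → (j:ℕ) ≠ m-1 →
          σ (C ⟨((i:ℕ)+1)%n, Nat.mod_lt _ hn0⟩ j)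
            - t * C i ⟨((j:ℕ)+1)%m, Nat.mod_lt _ hm0⟩ ∈ O) ∧
       (∀ i : Fin n, (i:ℕ) ≠ n-1 →
          σ (C ⟨((i:ℕ)+1)%n, Nat.mod_lt _ hn0⟩ ⟨m-1, by omega⟩) - C i ⟨0, hm0⟩ ∈ O) ∧
       (∀ j : Fin m, (j:ℕ) ≠ m-1 →
          σ (C ⟨0, hn0⟩ j) - C ⟨n-1, by omega⟩ ⟨((j:ℕ)+1)%m, Nat.mod_lt _ hm0⟩ ∈ O) ∧
       (t * σ (C ⟨0, hn0⟩ ⟨m-1, by omega⟩) - C ⟨n-1, by omega⟩ ⟨0, hm0⟩ ∈ O)) := by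
    intro C
    rw [hS, Set.mem_setOf_eq]
    constructor
    · intro h
      refine ⟨?_, ?_, ?_, ?_⟩
      · intro i j hi hj
        have h' := h i j
        rw [hE, hα, hβ, if_neg hi, if_neg hj, if_neg hi, if_neg hj] at h'
        norm_num at h'
        exact (hO _).mpr h'
      · intro i hi
        have h' := h i ⟨m-1, by omega⟩
        rw [hE, hα, hβ, if_neg hi, if_pos (show ((⟨m-1, by omega⟩ : Fin m):ℕ) = m-1 from rfl),
          if_neg hi, if_pos (show ((⟨m-1, by omega⟩ : Fin m):ℕ) = m-1 from rfl)] at h'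
        norm_num at h'
        exact (hO _).mpr h'
      · intro j hj
        have h' := h ⟨n-1, by omega⟩ j
        rw [hE, hα, hβ, if_pos (show ((⟨n-1, by omega⟩ : Fin n):ℕ) = n-1 from rfl),
          if_neg hj, if_pos (show ((⟨n-1, by omega⟩ : Fin n):ℕ) = n-1 from rfl),
          if_neg hj] at h'
        norm_num at h'
        rw [← mul_sub] at h'
        exact (htO _).mp h'
      · have h' := h ⟨n-1, by omega⟩ ⟨m-1, by omega⟩
        rw [hE, hα, hβ, if_pos (show ((⟨n-1, by omega⟩ : Fin n):ℕ) = n-1 from rfl),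
          if_pos (show ((⟨m-1, by omega⟩ : Fin m):ℕ) = m-1 from rfl),
          if_pos (show ((⟨n-1, by omega⟩ : Fin n):ℕ) = n-1 from rfl),
          if_pos (show ((⟨m-1, by omega⟩ : Fin m):ℕ) = m-1 from rfl)] at h'
        norm_num at h'
        exact (hO _).mpr h'
    · rintro ⟨h1, h2, h3, h4⟩ i j
      rw [hE, hα, hβ]
      by_cases hi : (i:ℕ) = n-1 <;> by_cases hj : (j:ℕ) = m-1
      · have hieq : i = ⟨n-1, by omega⟩ := Fin.ext hi
        have hjeq : j = ⟨m-1, by omega⟩ := Fin.ext hj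
        rw [if_pos hi, if_pos hj, if_pos hi, if_pos hj, hieq, hjeq]
        norm_num
        exact (hO _).mp h4
      · have hieq : i = ⟨n-1, by omega⟩ := Fin.ext hi
        rw [if_pos hi, if_neg hj, if_pos hi, if_neg hj, hieq]
        norm_num
        rw [← mul_sub]
        exact (htO _).mpr (h3 j hj)
      · have hjeq : j = ⟨m-1, by omega⟩ := Fin.ext hj
        rw [if_neg hi, if_pos hj, if_neg hi, if_pos hj, hjeq]
        norm_num
        exact (hO _).mp (h2 i hi)
      · rw [if_neg hi, if_neg hj, if_neg hi, if_neg hj]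
        norm_num
        exact (hO _).mp (h1 i j hi hj)
  -- basic valuation facts
  have hv1 : v (1 : L) = 0 := by
    have := hv_mul 1 1 one_ne_zero one_ne_zero
    rw [one_mul] at this; omega
  have hvneg : ∀ x : L, x ≠ 0 → v (-x) = v x := by
    have hm1 : v (-1 : L) = 0 := by
      have := hv_mul (-1 : L) (-1) (by norm_num) (by norm_num)
      rw [neg_mul_neg, one_mul] at this; omega
    intro x hx
    have := hv_mul (-1 : L) x (by norm_num) hx
    rw [neg_one_mul] at this; omega
  have hsub : ∀ x o : L, x ≠ 0 → v x < 0 → o ∈ O → (x - o ≠ 0 ∧ v (x - o) = v x) := by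
    intro x o hx hvx ho
    by_cases ho0 : o = 0
    · subst ho0; rw [sub_zero]; exact ⟨hx, rfl⟩
    · have hvo : 0 ≤ v o := by
        rcases (hO o).mp ho with h | h
        · exact absurd h ho0
        · exact h
      have hxo : x - o ≠ 0 := by
        intro h
        rw [sub_eq_zero] at h
        rw [h] at hvx; omega
      have h1 : min (v x) (v (-o)) ≤ v (x - o) := by
        have := hv_add x (-o) hx (neg_ne_zero.mpr ho0) (by rwa [← sub_eq_add_neg])
        rwa [← sub_eq_add_neg] at this
      have h2 : min (v (x-o)) (v o) ≤ v x := by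
        have hxx : x - o + o = x := by ring
        have := hv_add (x-o) o hxo ho0 (by rw [hxx]; exact hx)
        rwa [hxx] at this
      rw [hvneg o ho0] at h1
      exact ⟨hxo, by omega⟩
  have hσne : ∀ x : L, x ≠ 0 → σ x ≠ 0 := by
    intro x hx h
    exact hx (σ.injective (by rw [h, map_zero]))
  have hσO : ∀ x : L, x ∈ O → σ x ∈ O := by
    intro x hx
    by_cases hx0 : x = 0
    · rw [hx0, map_zero]; exact O.zero_mem
    · rcases (hO x).mp hx with h | h
      · exact absurd h hx0
      · exact (hO _).mpr (Or.inr (by rw [hσv x hx0]; exact h))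
  have htm : t ∈ O := (hO t).mpr (Or.inr (by omega))
  -- forcing lemmas
  have FA : ∀ (a b : L) (ν : ℤ), σ a - t * b ∈ O → a ≠ 0 → v a = ν → ν < 0 →
      b ≠ 0 ∧ v b = ν - 1 := by
    intro a b ν hab ha hva hν
    have hsa := hσne a ha
    obtain ⟨hne, heq⟩ := hsub (σ a) (σ a - t*b) hsa (by rw [hσv a ha]; omega) hab
    have he : σ a - (σ a - t*b) = t*b := by ring
    rw [he] at hne heq
    have hb : b ≠ 0 := fun h => hne (by rw [h, mul_zero])
    have hmul := hv_mul t b ht0 hb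
    rw [hσv a ha] at heq
    exact ⟨hb, by omega⟩
  have FBC : ∀ (a b : L) (ν : ℤ), σ a - b ∈ O → a ≠ 0 → v a = ν → ν < 0 →
      b ≠ 0 ∧ v b = ν := by
    intro a b ν hab ha hva hν
    have hsa := hσne a ha
    obtain ⟨hne, heq⟩ := hsub (σ a) (σ a - b) hsa (by rw [hσv a ha]; omega) hab
    have he : σ a - (σ a - b) = b := by ring
    rw [he] at hne heq
    rw [hσv a ha] at heq
    exact ⟨hne, by omega⟩
  have FD : ∀ (a b : L) (ν : ℤ), t * σ a - b ∈ O → a ≠ 0 → v a = ν → ν < -1 →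
      b ≠ 0 ∧ v b = ν + 1 := by
    intro a b ν hab ha hva hν
    have hsa := hσne a ha
    have hts : t * σ a ≠ 0 := mul_ne_zero ht0 hsa
    have hv' : v (t * σ a) = 1 + ν := by rw [hv_mul t _ ht0 hsa, hσv a ha, ht1, hva]
    obtain ⟨hne, heq⟩ := hsub (t * σ a) (t * σ a - b) hts (by omega) hab
    have he : t * σ a - (t * σ a - b) = b := by ring
    rw [he] at hne heq
    exact ⟨hne, by omega⟩
  -- the key structural lemma
  have key : ∀ C ∈ S, (∀ (i : Fin n) (j : Fin m), ¬((i:ℕ) = 0 ∧ (j:ℕ) = m-1) → C i j ∈ O)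
      ∧ t * C ⟨0, hn0⟩ ⟨m-1, by omega⟩ ∈ O := by
    intro C hC
    obtain ⟨h1, h2, h3, h4⟩ := (hmem C).mp hC
    have H1 : ∀ (r s : ℕ) (hr1 : r+1 < n) (hs1 : s+1 < m),
        σ (C ⟨r+1, hr1⟩ ⟨s, by omega⟩) - t * C ⟨r, by omega⟩ ⟨s+1, hs1⟩ ∈ O := by
      intro r s hr1 hs1
      have hcond := h1 ⟨r, by omega⟩ ⟨s, by omega⟩
        (by show ¬(r = n-1); omega) (by show ¬(s = m-1); omega)
      have e1 : (⟨(((⟨r, by omega⟩ : Fin n) : ℕ)+1)%n, Nat.mod_lt _ hn0⟩ : Fin n)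
          = (⟨r+1, hr1⟩ : Fin n) := Fin.ext (show (r+1)%n = r+1 from Nat.mod_eq_of_lt hr1)
      have e2 : (⟨(((⟨s, by omega⟩ : Fin m) : ℕ)+1)%m, Nat.mod_lt _ hm0⟩ : Fin m)
          = (⟨s+1, hs1⟩ : Fin m) := Fin.ext (show (s+1)%m = s+1 from Nat.mod_eq_of_lt hs1)
      rw [e1, e2] at hcond
      exact hcond
    have H2 : ∀ (r : ℕ) (hr1 : r+1 < n),
        σ (C ⟨r+1, hr1⟩ ⟨m-1, by omega⟩) - C ⟨r, by omega⟩ ⟨0, hm0⟩ ∈ O := by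
      intro r hr1
      have hcond := h2 ⟨r, by omega⟩ (by show ¬(r = n-1); omega)
      have e1 : (⟨(((⟨r, by omega⟩ : Fin n) : ℕ)+1)%n, Nat.mod_lt _ hn0⟩ : Fin n)
          = (⟨r+1, hr1⟩ : Fin n) := Fin.ext (show (r+1)%n = r+1 from Nat.mod_eq_of_lt hr1)
      rw [e1] at hcond
      exact hcond
    have H3 : ∀ (s : ℕ) (hs1 : s+1 < m),
        σ (C ⟨0, hn0⟩ ⟨s, by omega⟩) - C ⟨n-1, by omega⟩ ⟨s+1, hs1⟩ ∈ O := by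
      intro s hs1
      have hcond := h3 ⟨s, by omega⟩ (by show ¬(s = m-1); omega)
      have e2 : (⟨(((⟨s, by omega⟩ : Fin m) : ℕ)+1)%m, Nat.mod_lt _ hm0⟩ : Fin m)
          = (⟨s+1, hs1⟩ : Fin m) := Fin.ext (show (s+1)%m = s+1 from Nat.mod_eq_of_lt hs1)
      rw [e2] at hcond
      exact hcond
    by_cases hall : ∀ (i : Fin n) (j : Fin m), C i j ∈ O
    · exact ⟨fun i j _ => hall i j, O.mul_mem htm (hall _ _)⟩
    · push_neg at hall
      obtain ⟨i0, j0, hij0⟩ := hall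
      obtain ⟨p0, hp0mem, hp0min⟩ := Finset.exists_min_image
        (Finset.univ.filter (fun p : Fin n × Fin m => C p.1 p.2 ∉ O))
        (fun p => v (C p.1 p.2))
        ⟨(i0, j0), Finset.mem_filter.mpr ⟨Finset.mem_univ _, hij0⟩⟩
      have hp0' : C p0.1 p0.2 ∉ O := (Finset.mem_filter.mp hp0mem).2
      have hp0ne : C p0.1 p0.2 ≠ 0 := fun h => hp0' ((hO _).mpr (Or.inl h))
      set μ := v (C p0.1 p0.2) with hμdef
      have hμneg : μ < 0 := by
        by_contra h
        exact hp0' ((hO _).mpr (Or.inr (by omega)))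
      have hmin : ∀ (i : Fin n) (j : Fin m), C i j ≠ 0 → v (C i j) < 0 → μ ≤ v (C i j) := by
        intro i j hne hv'
        have hm2 : C i j ∉ O := by
          intro hmem'
          rcases (hO _).mp hmem' with h | h
          · exact hne h
          · omega
        exact hp0min (i, j) (Finset.mem_filter.mpr ⟨Finset.mem_univ _, hm2⟩)
      have stepA : ∀ (r s : ℕ) (hr : r < n) (hs : s < m), r ≠ 0 → s ≠ m-1 →
          C ⟨r, hr⟩ ⟨s, hs⟩ ≠ 0 → v (C ⟨r, hr⟩ ⟨s, hs⟩) = μ → False := by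
        intro r s hr hs hr0 hs' hne hveq
        have h' := H1 (r-1) s (by omega) (by omega)
        have er : (⟨r-1+1, by omega⟩ : Fin n) = ⟨r, hr⟩ := Fin.ext (show r-1+1 = r by omega)
        rw [er] at h'
        obtain ⟨hbne, hbv⟩ := FA _ _ μ h' hne hveq hμneg
        have := hmin _ _ hbne (by omega)
        omega
      have stepB : ∀ (r : ℕ) (hr : r < n), r ≠ 0 →
          C ⟨r, hr⟩ ⟨m-1, by omega⟩ ≠ 0 → v (C ⟨r, hr⟩ ⟨m-1, by omega⟩) = μ →
          C ⟨r-1, by omega⟩ ⟨0, hm0⟩ ≠ 0 ∧ v (C ⟨r-1, by omega⟩ ⟨0, hm0⟩) = μ := by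
        intro r hr hr0 hne hveq
        have h' := H2 (r-1) (by omega)
        have er : (⟨r-1+1, by omega⟩ : Fin n) = ⟨r, hr⟩ := Fin.ext (show r-1+1 = r by omega)
        rw [er] at h'
        exact FBC _ _ μ h' hne hveq hμneg
      have stepC : ∀ (s : ℕ) (hs : s+1 < m),
          C ⟨0, hn0⟩ ⟨s, by omega⟩ ≠ 0 → v (C ⟨0, hn0⟩ ⟨s, by omega⟩) = μ →
          C ⟨n-1, by omega⟩ ⟨s+1, hs⟩ ≠ 0
            ∧ v (C ⟨n-1, by omega⟩ ⟨s+1, hs⟩) = μ := by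
        intro s hs hne hveq
        have h' := H3 s hs
        exact FBC _ _ μ h' hne hveq hμneg
      have chain : ∀ (r s : ℕ) (hr : r < n) (hs : s < m),
          C ⟨r, hr⟩ ⟨s, hs⟩ ≠ 0 → v (C ⟨r, hr⟩ ⟨s, hs⟩) = μ → r = 0 ∧ s = m-1 := by
        intro r s hr hs hne hveq
        by_cases hr0 : r = 0 <;> by_cases hsm : s = m-1
        · exact ⟨hr0, hsm⟩
        · exfalso
          subst hr0
          obtain ⟨h1', h2'⟩ := stepC s (by omega) hne hveq
          by_cases h2m : s+1 = m-1
          · have es : (⟨s+1, by omega⟩ : Fin m) = ⟨m-1, by omega⟩ :=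
              Fin.ext (show s+1 = m-1 from h2m)
            rw [es] at h1' h2'
            obtain ⟨h1'', h2''⟩ := stepB (n-1) (by omega) (by omega) h1' h2'
            by_cases hn2 : n = 2
            · have e : (⟨n-1-1, by omega⟩ : Fin n) = ⟨0, hn0⟩ :=
                Fin.ext (show n-1-1 = 0 by omega)
              rw [e] at h1'' h2''
              obtain ⟨h1x, h2x⟩ := stepC 0 (by omega) h1'' h2''
              exact stepA (n-1) (0+1) (by omega) (by omega) (by omega) (by omega) h1x h2x
            · exact stepA (n-1-1) 0 (by omega) (by omega) (by omega) (by omega) h1'' h2''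
          · exact stepA (n-1) (s+1) (by omega) (by omega) (by omega) h2m h1' h2'
        · exfalso
          subst hsm
          obtain ⟨h1', h2'⟩ := stepB r hr hr0 hne hveq
          by_cases hr1 : r-1 = 0
          · have e : (⟨r-1, by omega⟩ : Fin n) = ⟨0, hn0⟩ :=
                Fin.ext (show r-1 = 0 from hr1)
            rw [e] at h1' h2'
            obtain ⟨h1'', h2''⟩ := stepC 0 (by omega) h1' h2'
            by_cases hm2 : m = 2
            · have e2 : (⟨0+1, by omega⟩ : Fin m) = ⟨m-1, by omega⟩ :=
                Fin.ext (show 0+1 = m-1 by omega)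
              rw [e2] at h1'' h2''
              obtain ⟨h1x, h2x⟩ := stepB (n-1) (by omega) (by omega) h1'' h2''
              exact stepA (n-1-1) 0 (by omega) (by omega) (by omega) (by omega) h1x h2x
            · exact stepA (n-1) (0+1) (by omega) (by omega) (by omega) (by omega) h1'' h2''
          · exact stepA (r-1) 0 (by omega) (by omega) hr1 (by omega) h1' h2'
        · exact absurd (stepA r s hr hs hr0 hsm hne hveq) id
      have hc := chain (p0.1 : ℕ) (p0.2 : ℕ) p0.1.isLt p0.2.isLt hp0ne hμdef.symm
      have hcorner : C ⟨0, hn0⟩ ⟨m-1, by omega⟩ ≠ 0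
          ∧ v (C ⟨0, hn0⟩ ⟨m-1, by omega⟩) = μ := by
        have e1 : p0.1 = ⟨0, hn0⟩ := Fin.ext hc.1
        have e2 : p0.2 = (⟨m-1, by omega⟩ : Fin m) := Fin.ext hc.2
        rw [e1, e2] at hp0ne hμdef
        exact ⟨hp0ne, hμdef.symm⟩
      have hμge : -1 ≤ μ := by
        by_contra hlt
        push_neg at hlt
        obtain ⟨hb, hbv⟩ := FD _ _ μ h4 hcorner.1 hcorner.2 (by omega)
        have h' := H1 (n-1-1) 0 (by omega) (by omega)
        have e : (⟨n-1-1+1, by omega⟩ : Fin n) = (⟨n-1, by omega⟩ : Fin n) :=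
          Fin.ext (show n-1-1+1 = n-1 by omega)
        rw [e] at h'
        obtain ⟨hb2, hbv2⟩ := FA _ _ (μ+1) h' hb hbv (by omega)
        have hfin := chain (n-1-1) (0+1) (by omega) (by omega) hb2 (by omega)
        exact hnm ⟨by omega, by omega⟩
      constructor
      · intro i j hnotc
        by_contra hmemO
        have hne : C i j ≠ 0 := fun h => hmemO ((hO _).mpr (Or.inl h))
        have hvn : v (C i j) < 0 := by
          by_contra h'
          push_neg at h'
          exact hmemO ((hO _).mpr (Or.inr h'))
        have hge := hmin i j hne hvn
        have hveq : v (C i j) = μ := by omega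
        exact hnotc (chain (i : ℕ) (j : ℕ) i.isLt j.isLt hne hveq)
      · have hvt : v (t * C ⟨0, hn0⟩ ⟨m-1, by omega⟩) = 1 + μ := by
          rw [hv_mul t _ ht0 hcorner.1, ht1, hcorner.2]
        refine (hO _).mpr (Or.inr ?_)
        rw [hvt]; omega
  -- group-structure statements
  have hS0 : (0 : Matrix (Fin n) (Fin m) L) ∈ S := by
    rw [hmem]
    refine ⟨fun i j _ _ => ?_, fun i _ => ?_, fun j _ => ?_, ?_⟩ <;>
      simpa using O.zero_mem
  have hSadd : ∀ C₁ ∈ S, ∀ C₂ ∈ S, C₁ + C₂ ∈ S := by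
    intro C₁ hC₁ C₂ hC₂
    obtain ⟨a1, b1, c1, d1⟩ := (hmem C₁).mp hC₁
    obtain ⟨a2, b2, c2, d2⟩ := (hmem C₂).mp hC₂
    rw [hmem]
    refine ⟨fun i j hi hj => ?_, fun i hi => ?_, fun j hj => ?_, ?_⟩
    · have he : σ ((C₁ + C₂) ⟨((i:ℕ)+1)%n, Nat.mod_lt _ hn0⟩ j)
          - t * (C₁ + C₂) i ⟨((j:ℕ)+1)%m, Nat.mod_lt _ hm0⟩
          = (σ (C₁ ⟨((i:ℕ)+1)%n, Nat.mod_lt _ hn0⟩ j)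
              - t * C₁ i ⟨((j:ℕ)+1)%m, Nat.mod_lt _ hm0⟩)
            + (σ (C₂ ⟨((i:ℕ)+1)%n, Nat.mod_lt _ hn0⟩ j)
              - t * C₂ i ⟨((j:ℕ)+1)%m, Nat.mod_lt _ hm0⟩) := by
        rw [Matrix.add_apply, Matrix.add_apply, map_add]; ring
      rw [he]
      exact O.add_mem (a1 i j hi hj) (a2 i j hi hj)
    · have he : σ ((C₁ + C₂) ⟨((i:ℕ)+1)%n, Nat.mod_lt _ hn0⟩ ⟨m-1, by omega⟩)
          - (C₁ + C₂) i ⟨0, hm0⟩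
          = (σ (C₁ ⟨((i:ℕ)+1)%n, Nat.mod_lt _ hn0⟩ ⟨m-1, by omega⟩) - C₁ i ⟨0, hm0⟩)
            + (σ (C₂ ⟨((i:ℕ)+1)%n, Nat.mod_lt _ hn0⟩ ⟨m-1, by omega⟩) - C₂ i ⟨0, hm0⟩) := by
        rw [Matrix.add_apply, Matrix.add_apply, map_add]; ring
      rw [he]
      exact O.add_mem (b1 i hi) (b2 i hi)
    · have he : σ ((C₁ + C₂) ⟨0, hn0⟩ j)
          - (C₁ + C₂) ⟨n-1, by omega⟩ ⟨((j:ℕ)+1)%m, Nat.mod_lt _ hm0⟩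
          = (σ (C₁ ⟨0, hn0⟩ j) - C₁ ⟨n-1, by omega⟩ ⟨((j:ℕ)+1)%m, Nat.mod_lt _ hm0⟩)
            + (σ (C₂ ⟨0, hn0⟩ j) - C₂ ⟨n-1, by omega⟩ ⟨((j:ℕ)+1)%m, Nat.mod_lt _ hm0⟩) := by
        rw [Matrix.add_apply, Matrix.add_apply, map_add]; ring
      rw [he]
      exact O.add_mem (c1 j hj) (c2 j hj)
    · have he : t * σ ((C₁ + C₂) ⟨0, hn0⟩ ⟨m-1, by omega⟩)
          - (C₁ + C₂) ⟨n-1, by omega⟩ ⟨0, hm0⟩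
          = (t * σ (C₁ ⟨0, hn0⟩ ⟨m-1, by omega⟩) - C₁ ⟨n-1, by omega⟩ ⟨0, hm0⟩)
            + (t * σ (C₂ ⟨0, hn0⟩ ⟨m-1, by omega⟩) - C₂ ⟨n-1, by omega⟩ ⟨0, hm0⟩) := by
        rw [Matrix.add_apply, Matrix.add_apply, map_add]; ring
      rw [he]
      exact O.add_mem d1 d2
  have hSneg : ∀ C ∈ S, -C ∈ S := by
    intro C hC
    obtain ⟨a1, b1, c1, d1⟩ := (hmem C).mp hC
    rw [hmem]
    refine ⟨fun i j hi hj => ?_, fun i hi => ?_, fun j hj => ?_, ?_⟩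
    · have he : σ ((-C) ⟨((i:ℕ)+1)%n, Nat.mod_lt _ hn0⟩ j)
          - t * (-C) i ⟨((j:ℕ)+1)%m, Nat.mod_lt _ hm0⟩
          = -(σ (C ⟨((i:ℕ)+1)%n, Nat.mod_lt _ hn0⟩ j)
              - t * C i ⟨((j:ℕ)+1)%m, Nat.mod_lt _ hm0⟩) := by
        rw [Matrix.neg_apply, Matrix.neg_apply, map_neg]; ring
      rw [he]
      exact O.neg_mem (a1 i j hi hj)
    · have he : σ ((-C) ⟨((i:ℕ)+1)%n, Nat.mod_lt _ hn0⟩ ⟨m-1, by omega⟩) - (-C) i ⟨0, hm0⟩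
          = -(σ (C ⟨((i:ℕ)+1)%n, Nat.mod_lt _ hn0⟩ ⟨m-1, by omega⟩) - C i ⟨0, hm0⟩) := by
        rw [Matrix.neg_apply, Matrix.neg_apply, map_neg]; ring
      rw [he]
      exact O.neg_mem (b1 i hi)
    · have he : σ ((-C) ⟨0, hn0⟩ j)
          - (-C) ⟨n-1, by omega⟩ ⟨((j:ℕ)+1)%m, Nat.mod_lt _ hm0⟩
          = -(σ (C ⟨0, hn0⟩ j) - C ⟨n-1, by omega⟩ ⟨((j:ℕ)+1)%m, Nat.mod_lt _ hm0⟩) := by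
        rw [Matrix.neg_apply, Matrix.neg_apply, map_neg]; ring
      rw [he]
      exact O.neg_mem (c1 j hj)
    · have he : t * σ ((-C) ⟨0, hn0⟩ ⟨m-1, by omega⟩) - (-C) ⟨n-1, by omega⟩ ⟨0, hm0⟩
          = -(t * σ (C ⟨0, hn0⟩ ⟨m-1, by omega⟩) - C ⟨n-1, by omega⟩ ⟨0, hm0⟩) := by
        rw [Matrix.neg_apply, Matrix.neg_apply, map_neg]; ring
      rw [he]
      exact O.neg_mem d1
  have hSO : ∀ C : Matrix (Fin n) (Fin m) L, (∀ i j, C i j ∈ O) → C ∈ S := by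
    intro C hC
    rw [hmem]
    refine ⟨fun i j hi hj => ?_, fun i hi => ?_, fun j hj => ?_, ?_⟩
    · exact O.sub_mem (hσO _ (hC _ _)) (O.mul_mem htm (hC _ _))
    · exact O.sub_mem (hσO _ (hC _ _)) (hC _ _)
    · exact O.sub_mem (hσO _ (hC _ _)) (hC _ _)
    · exact O.sub_mem (O.mul_mem htm (hσO _ (hC _ _))) (hC _ _)
  refine ⟨hS0, hSadd, hSneg, hSO, ?_, ?_, ?_⟩
  · intro C hC
    have htc := (key C hC).2
    refine Set.mem_smul_set.mpr ⟨t * C ⟨0, hn0⟩ ⟨m-1, by omega⟩, htc, ?_⟩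
    rw [smul_eq_mul, inv_mul_cancel_left₀ ht0]
  · intro C₁ hC₁ C₂ hC₂
    constructor
    · intro hq i j
      have hDS : C₁ - C₂ ∈ S := by
        rw [sub_eq_add_neg]
        exact hSadd C₁ hC₁ (-C₂) (hSneg C₂ hC₂)
      have hqm : -(C₁ (⟨0, by omega⟩ : Fin n) (⟨m-1, by omega⟩ : Fin m))
          + C₂ (⟨0, by omega⟩ : Fin n) (⟨m-1, by omega⟩ : Fin m)
          ∈ O.toAddSubgroup := (QuotientAddGroup.eq).mp hq
      have hcornO : (C₁ - C₂) (⟨0, by omega⟩ : Fin n) (⟨m-1, by omega⟩ : Fin m) ∈ O := by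
        rw [Matrix.sub_apply]
        have heq : C₁ (⟨0, by omega⟩ : Fin n) (⟨m-1, by omega⟩ : Fin m)
            - C₂ (⟨0, by omega⟩ : Fin n) (⟨m-1, by omega⟩ : Fin m)
            = -(-(C₁ (⟨0, by omega⟩ : Fin n) (⟨m-1, by omega⟩ : Fin m))
              + C₂ (⟨0, by omega⟩ : Fin n) (⟨m-1, by omega⟩ : Fin m)) := by
          ring
        rw [heq]
        exact O.neg_mem hqm
      by_cases hcase : (i:ℕ) = 0 ∧ (j:ℕ) = m-1
      · have e1 : i = (⟨0, by omega⟩ : Fin n) := Fin.ext hcase.1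
        have e2 : j = (⟨m-1, by omega⟩ : Fin m) := Fin.ext hcase.2
        rw [e1, e2]
        exact hcornO
      · exact (key _ hDS).1 i j hcase
    · intro hall
      have hcorn := hall (⟨0, by omega⟩ : Fin n) (⟨m-1, by omega⟩ : Fin m)
      rw [Matrix.sub_apply] at hcorn
      refine (QuotientAddGroup.eq).mpr ?_
      have heq : -(C₁ (⟨0, by omega⟩ : Fin n) (⟨m-1, by omega⟩ : Fin m))
          + C₂ (⟨0, by omega⟩ : Fin n) (⟨m-1, by omega⟩ : Fin m)
          = -(C₁ (⟨0, by omega⟩ : Fin n) (⟨m-1, by omega⟩ : Fin m)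
              - C₂ (⟨0, by omega⟩ : Fin n) (⟨m-1, by omega⟩ : Fin m)) := by ring
      rw [heq]
      exact O.neg_mem hcorn
  · rintro y ⟨c, hc, hy⟩
    obtain ⟨o, ho, hoc⟩ := Set.mem_smul_set.mp hc
    have htc : t * c ∈ O := by
      rw [← hoc, smul_eq_mul, mul_inv_cancel_left₀ ht0]
      exact ho
    refine ⟨Matrix.of (fun i j => if (i:ℕ) = 0 ∧ (j:ℕ) = m-1 then c else 0), ?_, ?_⟩
    · rw [hmem]
      refine ⟨fun i j hi hj => ?_, fun i hi => ?_, fun j hj => ?_, ?_⟩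
      · simp only [Matrix.of_apply]
        rw [if_neg (fun (h : (((⟨((i:ℕ)+1)%n, Nat.mod_lt _ hn0⟩ : Fin n)) : ℕ) = 0
            ∧ (j:ℕ) = m-1) => hj h.2), map_zero, zero_sub]
        by_cases hcase : (i:ℕ) = 0
            ∧ (((⟨((j:ℕ)+1)%m, Nat.mod_lt _ hm0⟩ : Fin m)) : ℕ) = m-1
        · rw [if_pos hcase]
          exact O.neg_mem htc
        · rw [if_neg hcase, mul_zero, neg_zero]
          exact O.zero_mem
      · simp only [Matrix.of_apply]
        have hlt : (i:ℕ)+1 < n := by have := i.isLt; omega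
        have hmod : ¬(((i:ℕ)+1)%n = 0) := by rw [Nat.mod_eq_of_lt hlt]; omega
        have hm1 : ¬((0:ℕ) = m-1) := by omega
        rw [if_neg (show ¬(((i:ℕ)+1)%n = 0 ∧ True) from fun h => hmod h.1), map_zero,
          if_neg (show ¬((i:ℕ) = 0 ∧ (0:ℕ) = m-1) from fun h => hm1 h.2), sub_zero]
        exact O.zero_mem
      · simp only [Matrix.of_apply]
        have hn1 : ¬(n-1 = 0) := by omega
        rw [if_neg (show ¬(True ∧ (j:ℕ) = m-1) from fun h => hj h.2), map_zero,
          if_neg (show ¬(n-1 = 0 ∧ ((j:ℕ)+1)%m = m-1) from fun h => hn1 h.1),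
          zero_sub, neg_zero]
        exact O.zero_mem
      · simp only [Matrix.of_apply]
        have hn1 : ¬(n-1 = 0) := by omega
        rw [if_pos (show True ∧ True from ⟨trivial, trivial⟩),
          if_neg (show ¬(n-1 = 0 ∧ (0:ℕ) = m-1) from fun h => hn1 h.1), sub_zero]
        by_cases hc0 : c = 0
        · rw [hc0, map_zero, mul_zero]
          exact O.zero_mem
        · have htcne : t * c ≠ 0 := mul_ne_zero ht0 hc0
          have hvtc : 0 ≤ v (t * c) := by
            rcases (hO _).mp htc with h | h
            · exact absurd h htcne
            · exact h
          refine (hO _).mpr (Or.inr ?_)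
          rw [hv_mul t _ ht0 (hσne c hc0), hσv c hc0]
          rw [hv_mul t c ht0 hc0] at hvtc
          omega
    · simp only [Matrix.of_apply]
      rw [if_pos (show True ∧ True from ⟨trivial, trivial⟩)]
      exact hy
end

section
/- Let n, m ≥ 1 and let h = (h_{ij}) ∈ M_{n×m}(L). Let g ∈ GL_{n+m}(L) be the block matrix [[τ_n, h], [0, τ_m]]. Then g ∈ GL_{n+m}(𝒪_L) · diag(t^2, 1, …, 1) · GL_{n+m}(𝒪_L) if and only if h_{n,1} is a unit of 𝒪_L (i.e. v(h_{n,1}) = 0) and h_{ij} ∈ 𝒪_L for all (i,j). -/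
/-!
Write `g = [[τ_n, h], [0, τ_m]]`. Since `τ_r = P · diag(t, 1, …, 1)` for the cyclic permutation
matrix `P`, the matrix `σ_r = t · τ_r⁻¹` is integral, and `X = t² · g⁻¹` is the integral matrix
`[[t σ_n, -σ_n h σ_m], [0, t σ_m]]`. The `(1, m)` entry of `σ_n h σ_m` is `h_{n,1}`; every other
entry is divisible by `t`.

If `g = U · diag(t², 1, …, 1) · V` with `U, V ∈ GL(𝒪)`, then `g` and hence `h` is integral. If
moreover `t ∣ h_{n,1}`, then `Y = t⁻¹ X` is integral with `g Y = t`, and conjugating by `U` gives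
`diag(t², 1, …, 1) · (V Y U) = t`, i.e. `t² ∣ t` in `𝒪`, which is absurd.

Conversely, if `h` is integral and `h_{n,1}` a unit, the last column `w` of `X` satisfies
`g w = t² e_{n+m}` and `w_1 = -h_{n,1}` is a unit. Replacing the first column of `1` by `w`
and the first column of `g` by `e_{n+m}` gives `g W = U · diag(t², 1, …, 1)`, where
`det W = w_1` and `det U = ± w_1`, since `det g = ± t²`.
-/

open Matrix

section DoubleCoset

variable {R ι : Type*} [CommRing R] [Fintype ι] [DecidableEq ι]

theorem Matrix.dvd_of_mul_diagonal_mul_mul_eq_smul_one {U V Y : Matrix ι ι R} {d : ι → R}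
    {c : R} (hU : IsUnit U.det) (h : U * diagonal d * V * Y = c • 1) (i : ι) : d i ∣ c := by
  have hD : diagonal d * (V * Y * U) = c • 1 := by
    calc diagonal d * (V * Y * U) = U⁻¹ * (U * diagonal d * V * Y) * U := by
          simp only [Matrix.mul_assoc, nonsing_inv_mul_cancel_left _ _ hU]
      _ = c • 1 := by rw [h, Matrix.mul_smul, Matrix.mul_one, Matrix.smul_mul,
          nonsing_inv_mul _ hU]
  exact ⟨(V * Y * U) i i, by simpa using (congrFun (congrFun hD i) i).symm⟩

theorem Matrix.exists_eq_mul_diagonal_mulSingle_mul [IsDomain R] {A : Matrix ι ι R}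
    {w x : ι → R} {c : R} {j : ι} (hc : c ≠ 0) (hA : Associated c A.det)
    (hAw : A *ᵥ w = c • x) (hwj : IsUnit (w j)) :
    ∃ U V : Matrix ι ι R, IsUnit U.det ∧ IsUnit V.det ∧
      A = U * diagonal (Pi.mulSingle j c) * V := by
  set W := (1 : Matrix ι ι R).updateCol j w
  set U := A.updateCol j x
  have hAW : A * W = U * diagonal (Pi.mulSingle j c) := by
    ext a b
    by_cases hb : b = j
    · subst hb; simp [W, U, mul_updateCol, hAw, mul_comm]
    · simp [W, U, mul_updateCol, hb]
  have hW : W.det = w j := by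
    rw [← cramer_apply, cramer_one]; rfl
  obtain ⟨u, hu⟩ := hA
  have hU : U.det = u * w j := by
    have := congrArg det hAW
    rw [det_mul, det_mul, hW, det_diagonal, Fintype.prod_pi_mulSingle', ← hu] at this
    exact mul_right_cancel₀ hc (by rw [← this]; ring)
  refine ⟨U, W⁻¹, hU ▸ u.isUnit.mul hwj, isUnit_nonsing_inv_det _ (hW ▸ hwj), ?_⟩
  rw [← hAW, mul_nonsing_inv_cancel_right _ _ (hW ▸ hwj)]

end DoubleCoset

section Tau

variable {L : Type*} [Field L] (t : L) (r : ℕ)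

theorem tau_eq_permMatrix_mul_diagonal :
    tau t (r + 1) = (finRotate (r + 1)).permMatrix L * diagonal (Pi.mulSingle 0 t) := by
  ext i j
  rw [PEquiv.toMatrix_toPEquiv_mul, submatrix_apply, diagonal_apply, finRotate_apply]
  rcases Fin.eq_castSucc_or_eq_last i with ⟨i, rfl⟩ | rfl
  · rw [Fin.coeSucc_eq_succ]
    simp only [tau, of_apply, id, Fin.val_castSucc, Fin.ext_iff, Fin.val_succ, Fin.val_zero,
      Pi.mulSingle_apply]
    split_ifs <;> first | rfl | omega | contradiction
  · simp only [tau, of_apply, id, Fin.last_add_one, Fin.ext_iff, Fin.val_last, Fin.val_zero,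
      Pi.mulSingle_apply]
    split_ifs <;> first | rfl | omega

theorem det_tau : (tau t (r + 1)).det = (-1) ^ r * t := by
  rw [tau_eq_permMatrix_mul_diagonal, det_mul, det_permutation, sign_finRotate, det_diagonal,
    Fintype.prod_pi_mulSingle']
  simp

/-- `t • (tau t (r + 1))⁻¹`. -/
def tauDual : Matrix (Fin (r + 1)) (Fin (r + 1)) L :=
  diagonal (Function.update (fun _ => t) 0 1) * (finRotate (r + 1))⁻¹.permMatrix L

theorem tau_mul_tauDual : tau t (r + 1) * tauDual t r = t • 1 := by
  have hd : (fun i => (Pi.mulSingle 0 t : Fin (r + 1) → L) i *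
      Function.update (fun _ => t) 0 1 i) = fun _ => t := by
    ext i; by_cases hi : i = 0 <;> simp [hi]
  rw [tau_eq_permMatrix_mul_diagonal, tauDual, mul_assoc, ← mul_assoc (diagonal _),
    diagonal_mul_diagonal, hd, ← smul_one_eq_diagonal, smul_mul_assoc, one_mul, mul_smul_comm,
    ← permMatrix_mul, inv_mul_cancel, permMatrix_one]

theorem tauDual_mul_apply {k : Type*} (N : Matrix (Fin (r + 1)) k L) (i : Fin (r + 1)) (j : k) :
    (tauDual t r * N) i j = Function.update (fun _ => t) 0 1 i * N (i - 1) j := by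
  rw [tauDual, Matrix.mul_assoc, diagonal_mul, PEquiv.toMatrix_toPEquiv_mul]
  simp

theorem mul_tauDual_apply {k : Type*} [Fintype k] (N : Matrix k (Fin (r + 1)) L) (i : k)
    (j : Fin (r + 1)) :
    (N * tauDual t r) i j = N i (j + 1) * Function.update (fun _ => t) 0 1 (j + 1) := by
  rw [tauDual, ← Matrix.mul_assoc, PEquiv.mul_toMatrix_toPEquiv]
  simp [Equiv.Perm.inv_def, finRotate_apply]

end Tau

section Valuation

variable {L : Type*} [Field L] {v : L → ℤ} {O : Subring L}

theorem val_inv (hv_mul : ∀ x y : L, x ≠ 0 → y ≠ 0 → v (x * y) = v x + v y) {x : L}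
    (hx : x ≠ 0) : v x⁻¹ = -v x := by
  have h1 := hv_mul 1 1 one_ne_zero one_ne_zero
  have hx' := hv_mul x x⁻¹ hx (inv_ne_zero hx)
  rw [one_mul] at h1
  rw [mul_inv_cancel₀ hx] at hx'
  omega

theorem inv_mem_iff_val_nonpos (hv_mul : ∀ x y : L, x ≠ 0 → y ≠ 0 → v (x * y) = v x + v y)
    (hO : ∀ x : L, x ∈ O ↔ x = 0 ∨ 0 ≤ v x) {x : L} (hx : x ≠ 0) : x⁻¹ ∈ O ↔ v x ≤ 0 := by
  rw [hO, val_inv hv_mul hx]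
  simp [hx]

theorem isUnit_of_val_eq_zero (hv_mul : ∀ x y : L, x ≠ 0 → y ≠ 0 → v (x * y) = v x + v y)
    (hO : ∀ x : L, x ∈ O ↔ x = 0 ∨ 0 ≤ v x) {x : O} (hx : (x : L) ≠ 0) (hxv : v x = 0) :
    IsUnit x :=
  IsUnit.of_mul_eq_one ⟨_, (inv_mem_iff_val_nonpos hv_mul hO hx).2 hxv.le⟩
    (Subtype.ext (mul_inv_cancel₀ hx))

theorem inv_mul_mem_of_val_ne_zero
    (hv_mul : ∀ x y : L, x ≠ 0 → y ≠ 0 → v (x * y) = v x + v y)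
    (hO : ∀ x : L, x ∈ O ↔ x = 0 ∨ 0 ≤ v x) {t x : L} (ht0 : t ≠ 0) (ht1 : v t = 1)
    (hx : x ∈ O) (hxv : x ≠ 0 → v x ≠ 0) : t⁻¹ * x ∈ O := by
  by_cases hx0 : x = 0
  · simp [hx0]
  have := ((hO x).1 hx).resolve_left hx0
  have := hxv hx0
  rw [hO, hv_mul _ _ (inv_ne_zero ht0) hx0, val_inv hv_mul ht0]
  omega

end Valuation

section BlockTau

variable {L : Type*} [Field L] (t : L) {n m : ℕ} (h : Matrix (Fin (n + 1)) (Fin (m + 1)) L)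

/-- The paper's `g` for the sizes `n + 1`, `m + 1`; with 0-based indices its `h_{n+1,1}` is
`h (Fin.last n) 0`. -/
def blockTau : Matrix (Fin (n + 1) ⊕ Fin (m + 1)) (Fin (n + 1) ⊕ Fin (m + 1)) L :=
  fromBlocks (tau t (n + 1)) h 0 (tau t (m + 1))

/-- `t ^ 2 • (blockTau t h)⁻¹`. -/
def blockTauScaledInv : Matrix (Fin (n + 1) ⊕ Fin (m + 1)) (Fin (n + 1) ⊕ Fin (m + 1)) L :=
  fromBlocks (t • tauDual t n) (-(tauDual t n * h * tauDual t m)) 0 (t • tauDual t m)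

theorem blockTau_mul_blockTauScaledInv :
    blockTau t h * blockTauScaledInv t h = t ^ 2 • 1 := by
  rw [blockTau, blockTauScaledInv, fromBlocks_multiply, ← fromBlocks_one, fromBlocks_smul]
  simp [Matrix.mul_smul, ← Matrix.mul_assoc, tau_mul_tauDual, pow_two, smul_smul]

theorem det_blockTau : (blockTau t h).det = (-1) ^ (n + m) * t ^ 2 := by
  rw [blockTau, det_fromBlocks_zero₂₁, det_tau, det_tau]
  ring

theorem tauDual_mul_mul_tauDual_apply (i : Fin (n + 1)) (j : Fin (m + 1)) :
    (tauDual t n * h * tauDual t m) i j =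
      Function.update (fun _ => t) 0 1 i * h (i - 1) (j + 1) *
        Function.update (fun _ => t) 0 1 (j + 1) := by
  rw [mul_tauDual_apply, tauDual_mul_apply]

theorem blockTauScaledInv_inl_zero_inr_last :
    blockTauScaledInv t h (.inl 0) (.inr (Fin.last m)) = -h (Fin.last n) 0 := by
  have : (0 : Fin (n + 1)) - 1 = Fin.last n := by rw [Fin.ext_iff]; simp
  simp [blockTauScaledInv, tauDual_mul_mul_tauDual_apply, this]

variable {O : Subring L} {t}

theorem update_const_mem (htO : t ∈ O) {r : ℕ} (i : Fin (r + 1)) :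
    Function.update (fun _ => t) 0 1 i ∈ O := by
  by_cases hi : i = 0 <;> simp [hi, htO, O.one_mem]

theorem tauDual_mem (htO : t ∈ O) {r : ℕ} (i j : Fin (r + 1)) : tauDual t r i j ∈ O := by
  rw [← Matrix.mul_one (tauDual t r), tauDual_mul_apply, one_apply]
  split_ifs
  · simpa using update_const_mem htO i
  · simp

variable {h}

theorem tau_mem (htO : t ∈ O) {r : ℕ} (i j : Fin r) : tau t r i j ∈ O := by
  simp only [tau, of_apply]
  split_ifs
  exacts [O.one_mem, htO, O.zero_mem]

theorem blockTau_mem (htO : t ∈ O) (hh : ∀ i j, h i j ∈ O) :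
    ∀ a b, blockTau t h a b ∈ O := by
  rintro (i | i) (j | j)
  exacts [tau_mem htO i j, hh i j, O.zero_mem, tau_mem htO i j]

theorem blockTauScaledInv_mem (htO : t ∈ O) (hh : ∀ i j, h i j ∈ O) :
    ∀ a b, blockTauScaledInv t h a b ∈ O := by
  rintro (i | i) (j | j)
  · exact O.mul_mem htO (tauDual_mem htO i j)
  · rw [blockTauScaledInv, fromBlocks_apply₁₂, neg_apply, tauDual_mul_mul_tauDual_apply]
    exact O.neg_mem
      (O.mul_mem (O.mul_mem (update_const_mem htO i) (hh _ _)) (update_const_mem htO _))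
  · exact O.zero_mem
  · exact O.mul_mem htO (tauDual_mem htO i j)

theorem inv_mul_blockTauScaledInv_mem (ht0 : t ≠ 0) (htO : t ∈ O) (hh : ∀ i j, h i j ∈ O)
    (hlast : t⁻¹ * h (Fin.last n) 0 ∈ O) : ∀ a b, t⁻¹ * blockTauScaledInv t h a b ∈ O := by
  rintro (i | i) (j | j)
  · simpa [blockTauScaledInv, ht0] using tauDual_mem htO i j
  · rw [blockTauScaledInv, fromBlocks_apply₁₂, neg_apply, tauDual_mul_mul_tauDual_apply, mul_neg]
    refine O.neg_mem ?_
    by_cases hi : i = 0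
    · by_cases hj : j + 1 = 0
      · have hlast' : i - 1 = Fin.last n := by rw [hi, Fin.ext_iff]; simp
        rw [hlast', hj]
        simpa [hi] using hlast
      · simpa [hj, ht0, mul_comm, mul_left_comm] using
          O.mul_mem (update_const_mem htO i) (hh (i - 1) (j + 1))
    · simpa [hi, ht0, mul_assoc] using
        O.mul_mem (hh (i - 1) (j + 1)) (update_const_mem htO (j + 1))
  · rw [blockTauScaledInv, fromBlocks_apply₂₁, Matrix.zero_apply, mul_zero]
    exact O.zero_mem
  · simpa [blockTauScaledInv, ht0] using tauDual_mem htO i j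

end BlockTau

theorem Matrix.map_diagonal_mulSingle {R S ι : Type*} [Semiring R] [Semiring S] [DecidableEq ι]
    (f : R →+* S) (j : ι) (c : R) :
    (diagonal (Pi.mulSingle j c)).map f = diagonal (Pi.mulSingle j (f c)) := by
  rw [diagonal_map (map_zero f)]
  exact congrArg diagonal (funext (Pi.apply_mulSingle (fun _ => f) (fun _ => map_one f) j c))

section MemDoubleCoset

variable {L ι κ : Type*} [CommRing L] [Fintype ι] [DecidableEq ι] [Fintype κ] [DecidableEq κ]
  {O : Subring L}

def MemDoubleCoset (O : Subring L) (D A : Matrix ι ι L) : Prop :=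
  ∃ U V : Matrix ι ι O, IsUnit U.det ∧ IsUnit V.det ∧ A = U.map (↑) * D * V.map (↑)

theorem MemDoubleCoset.reindex {D A : Matrix ι ι L} (e : ι ≃ κ) (H : MemDoubleCoset O D A) :
    MemDoubleCoset O (Matrix.reindex e e D) (Matrix.reindex e e A) := by
  obtain ⟨U, V, hU, hV, rfl⟩ := H
  refine ⟨Matrix.reindex e e U, Matrix.reindex e e V, by rwa [det_reindex_self],
    by rwa [det_reindex_self], ?_⟩
  simp only [reindex_apply, ← submatrix_map, submatrix_mul_equiv]

theorem memDoubleCoset_reindex_iff {D A : Matrix ι ι L} (e : ι ≃ κ) :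
    MemDoubleCoset O (reindex e e D) (reindex e e A) ↔ MemDoubleCoset O D A :=
  ⟨fun H => by simpa using H.reindex e.symm, fun H => H.reindex e⟩

end MemDoubleCoset

section BlockTauDoubleCoset

variable {L : Type*} [Field L] {v : L → ℤ} {t : L} {O : Subring L} {n m : ℕ}
  {h : Matrix (Fin (n + 1)) (Fin (m + 1)) L}

theorem blockTau_entries_of_memDoubleCoset
    (hv_mul : ∀ x y : L, x ≠ 0 → y ≠ 0 → v (x * y) = v x + v y)
    (hO : ∀ x : L, x ∈ O ↔ x = 0 ∨ 0 ≤ v x) (ht0 : t ≠ 0) (ht1 : v t = 1)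
    (H : MemDoubleCoset O (diagonal (Pi.mulSingle (.inl 0) (t ^ 2))) (blockTau t h)) :
    h (Fin.last n) 0 ≠ 0 ∧ v (h (Fin.last n) 0) = 0 ∧ ∀ i j, h i j ∈ O := by
  have htO : t ∈ O := (hO t).2 (.inr (by omega))
  set tO : O := ⟨t, htO⟩
  obtain ⟨U, V, hU, -, hg⟩ := H
  set G := U * diagonal (Pi.mulSingle (.inl 0) (tO ^ 2)) * V
  have hG : blockTau t h = G.map O.subtype := by
    rw [hg, Matrix.map_mul, Matrix.map_mul, Matrix.map_diagonal_mulSingle, map_pow]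
    rfl
  have hh : ∀ i j, h i j ∈ O := fun i j => by
    have hij : h i j = G (.inl i) (.inr j) := congrFun (congrFun hG (.inl i)) (.inr j)
    exact hij ▸ (G _ _).2
  have hunit : h (Fin.last n) 0 ≠ 0 ∧ v (h (Fin.last n) 0) = 0 := by
    by_contra hbad
    have hlast : t⁻¹ * h (Fin.last n) 0 ∈ O :=
      inv_mul_mem_of_val_ne_zero hv_mul hO ht0 ht1 (hh _ _) fun h0 hv => hbad ⟨h0, hv⟩
    set Y : Matrix _ _ O := fun a b => ⟨_, inv_mul_blockTauScaledInv_mem ht0 htO hh hlast a b⟩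
    have hGY : G * Y = tO • 1 := by
      apply Matrix.map_injective Subtype.val_injective
      have hY : Y.map O.subtype = t⁻¹ • blockTauScaledInv t h := rfl
      dsimp only
      rw [← Subring.coe_subtype, Matrix.map_mul, ← hG, hY, Matrix.mul_smul,
        blockTau_mul_blockTauScaledInv, smul_smul, pow_two, inv_mul_cancel_left₀ ht0]
      ext a b
      by_cases hab : a = b <;> simp [hab, tO]
    obtain ⟨c, hc⟩ := dvd_of_mul_diagonal_mul_mul_eq_smul_one hU hGY (.inl 0)
    have hc' : t * (t * c) = t * 1 := by
      simpa [tO, pow_two, mul_assoc] using congrArg Subtype.val hc.symm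
    have htinv : t⁻¹ ∈ O := eq_inv_of_mul_eq_one_right (mul_left_cancel₀ ht0 hc') ▸ c.2
    have := (inv_mem_iff_val_nonpos hv_mul hO ht0).1 htinv
    omega
  exact ⟨hunit.1, hunit.2, hh⟩

theorem memDoubleCoset_blockTau_of_entries
    (hv_mul : ∀ x y : L, x ≠ 0 → y ≠ 0 → v (x * y) = v x + v y)
    (hO : ∀ x : L, x ∈ O ↔ x = 0 ∨ 0 ≤ v x) (ht0 : t ≠ 0) (ht1 : v t = 1)
    (hne : h (Fin.last n) 0 ≠ 0) (hv : v (h (Fin.last n) 0) = 0) (hh : ∀ i j, h i j ∈ O) :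
    MemDoubleCoset O (diagonal (Pi.mulSingle (.inl 0) (t ^ 2))) (blockTau t h) := by
  have htO : t ∈ O := (hO t).2 (.inr (by omega))
  set tO : O := ⟨t, htO⟩
  set G : Matrix _ _ O := fun a b => ⟨blockTau t h a b, blockTau_mem htO hh a b⟩
  have hG : G.map O.subtype = blockTau t h := rfl
  set w : _ → O := fun a => ⟨_, blockTauScaledInv_mem htO hh a (.inr (Fin.last m))⟩
  have hGw : G *ᵥ w = tO ^ 2 • Pi.single (.inr (Fin.last m)) 1 := by
    have hw : O.subtype ∘ w = blockTauScaledInv t h *ᵥ Pi.single (.inr (Fin.last m)) 1 := by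
      funext a
      simp [w]
    funext a
    apply Subtype.ext
    rw [← Subring.coe_subtype, RingHom.map_mulVec, hG, hw, mulVec_mulVec,
      blockTau_mul_blockTauScaledInv, smul_mulVec, one_mulVec]
    by_cases ha : a = .inr (Fin.last m) <;> simp [tO, ha]
  have hdet : Associated (tO ^ 2) G.det := by
    have : G.det = (-1) ^ (n + m) * tO ^ 2 := by
      apply Subtype.ext
      rw [← Subring.coe_subtype, RingHom.map_det, RingHom.mapMatrix_apply, hG, det_blockTau]
      simp [tO]
    rw [this]
    exact (associated_unit_mul_left _ _ (isUnit_neg_one.pow _)).symm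
  have hw : IsUnit (w (.inl 0)) := by
    have : w (.inl 0) = -⟨h (Fin.last n) 0, hh _ _⟩ :=
      Subtype.ext (blockTauScaledInv_inl_zero_inr_last t h)
    rw [this]
    exact (isUnit_of_val_eq_zero hv_mul hO hne hv).neg
  obtain ⟨U, V, hU, hV, hGUV⟩ :=
    exists_eq_mul_diagonal_mulSingle_mul (pow_ne_zero 2 (ne_of_apply_ne Subtype.val ht0)) hdet
      hGw hw
  refine ⟨U, V, hU, hV, ?_⟩
  rw [← hG, hGUV, Matrix.map_mul, Matrix.map_mul, Matrix.map_diagonal_mulSingle, map_pow]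
  rfl

end BlockTauDoubleCoset

/-- For the block matrix `g = [[τ_n, h], [0, τ_m]]`, one has
`g ∈ GL_{n+m}(𝒪_L) · diag(t², 1, …, 1) · GL_{n+m}(𝒪_L)` iff `h_{n,1}` is a unit of `𝒪_L`
(i.e. `v(h_{n,1}) = 0`) and all entries of `h` lie in `𝒪_L`. -/
theorem stmt_13 {L : Type*} [Field L] (v : L → ℤ) (t : L)
    (hv_mul : ∀ x y : L, x ≠ 0 → y ≠ 0 → v (x * y) = v x + v y)
    (ht0 : t ≠ 0) (ht1 : v t = 1)
    (O : Subring L) (hO : ∀ x : L, x ∈ O ↔ x = 0 ∨ 0 ≤ v x)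
    (n m : ℕ) (hn : 1 ≤ n) (hm : 1 ≤ m)
    (h : Matrix (Fin n) (Fin m) L) :
    (∃ U V : Matrix (Fin (n + m)) (Fin (n + m)) O, IsUnit U.det ∧ IsUnit V.det ∧
        Matrix.reindex finSumFinEquiv finSumFinEquiv (Matrix.fromBlocks (tau t n) h 0 (tau t m)) =
          U.map (fun x => (x : L)) *
            Matrix.diagonal (fun i : Fin (n + m) => if (i : ℕ) = 0 then t ^ 2 else 1) *
            V.map (fun x => (x : L)))
      ↔ (h (⟨n - 1, by omega⟩ : Fin n) (⟨0, by omega⟩ : Fin m) ≠ 0 ∧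
          v (h (⟨n - 1, by omega⟩ : Fin n) (⟨0, by omega⟩ : Fin m)) = 0 ∧
          ∀ i j, h i j ∈ O) := by
  obtain ⟨n, rfl⟩ : ∃ k, n = k + 1 := ⟨n - 1, by omega⟩
  obtain ⟨m, rfl⟩ : ∃ k, m = k + 1 := ⟨m - 1, by omega⟩
  have hD : diagonal (fun i : Fin (n + 1 + (m + 1)) => if (i : ℕ) = 0 then t ^ 2 else 1) =
      reindex finSumFinEquiv finSumFinEquiv (diagonal (Pi.mulSingle (.inl 0) (t ^ 2))) := by
    rw [reindex_apply, submatrix_diagonal_equiv]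
    congr 1
    funext i
    rw [Function.comp_apply, Pi.mulSingle_apply]
    refine if_congr ?_ rfl rfl
    rw [Equiv.symm_apply_eq, Fin.ext_iff]
    simp
  have hlast : (⟨n + 1 - 1, by omega⟩ : Fin (n + 1)) = Fin.last n := Fin.ext (by simp)
  change MemDoubleCoset O _ (reindex finSumFinEquiv finSumFinEquiv (blockTau t h)) ↔ _
  rw [hD, memDoubleCoset_reindex_iff, Fin.mk_zero, hlast]
  exact ⟨blockTau_entries_of_memDoubleCoset hv_mul hO ht0 ht1,
    fun ⟨hne, hv, hh⟩ => memDoubleCoset_blockTau_of_entries hv_mul hO ht0 ht1 hne hv hh⟩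
end

section
/- Let r ≥ 1 and let s be a positive integer. Define Φ : L^r → L^r by Φ(x_1, …, x_r) = (t^s·σ(x_r), σ(x_1), …, σ(x_{r−1})). Then for every y ∈ L^r, the sequence of partial sums (Σ_{n=0}^{N−1} Φ^n(y))_{N≥1} converges in L^r (with the product of the valuation topologies) to an element x ∈ L^r satisfying x − Φ(x) = y. In particular, (id − Φ) : L^r → L^r is bijective with inverse y ↦ Σ_{n≥0} Φ^n(y). -/
/-- For a positive integer `s` and
`Φ(x_1,…,x_r) = (t^s σ(x_r), σ(x_1), …, σ(x_{r−1}))` on `L^r` (`L` complete), for every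
`y ∈ L^r` the partial sums `Σ_{n<N} Φ^n(y)` converge componentwise to some `x ∈ L^r` with
`x − Φ(x) = y`; in particular `id − Φ` is bijective with inverse `y ↦ Σ_{n≥0} Φ^n(y)`. -/
theorem stmt_17 {L : Type*} [Field L] (v : L → ℤ) (t : L)
    (hv_mul : ∀ x y : L, x ≠ 0 → y ≠ 0 → v (x * y) = v x + v y)
    (hv_add : ∀ x y : L, x ≠ 0 → y ≠ 0 → x + y ≠ 0 → min (v x) (v y) ≤ v (x + y))
    (hv_surj : ∀ n : ℤ, ∃ x : L, x ≠ 0 ∧ v x = n)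
    (ht0 : t ≠ 0) (ht1 : v t = 1)
    -- completeness of `L` for the valuation topology (Cauchy sequences converge)
    (hcomp : ∀ x : ℕ → L,
      (∀ M : ℤ, ∃ N : ℕ, ∀ a ≥ N, ∀ b ≥ N, x a - x b = 0 ∨ M ≤ v (x a - x b)) →
      ∃ l : L, ∀ M : ℤ, ∃ N : ℕ, ∀ a ≥ N, x a - l = 0 ∨ M ≤ v (x a - l))
    (σ : L ≃+* L) (hσt : σ t = t) (hσv : ∀ x : L, x ≠ 0 → v (σ x) = v x)
    (r : ℕ) (hr : 1 ≤ r) (s : ℤ) (hs : 0 < s)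
    (Φ : (Fin r → L) → (Fin r → L))
    (hΦ : ∀ (x : Fin r → L) (i : Fin r), Φ x i =
      if (i : ℕ) = 0 then t ^ s * σ (x (⟨r - 1, by omega⟩ : Fin r))
      else σ (x (⟨(i : ℕ) - 1, by omega⟩ : Fin r))) :
    (∀ y : Fin r → L, ∃ x : Fin r → L,
      (∀ i : Fin r, ∀ M : ℤ, ∃ N₀ : ℕ, ∀ N ≥ N₀,
        (∑ n ∈ Finset.range N, Φ^[n] y i) - x i = 0 ∨
          M ≤ v ((∑ n ∈ Finset.range N, Φ^[n] y i) - x i)) ∧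
      x - Φ x = y) ∧
    Function.Bijective (fun x : Fin r → L => x - Φ x) := by
  classical
  -- basic valuation facts
  have v1 : v 1 = 0 := by
    have h := hv_mul 1 1 one_ne_zero one_ne_zero
    rw [one_mul] at h; omega
  have vneg : ∀ x : L, x ≠ 0 → v (-x) = v x := by
    intro x hx
    have hm1 : (-1 : L) ≠ 0 := by norm_num
    have h1 : v ((-1 : L) * (-1)) = v (-1 : L) + v (-1 : L) := hv_mul _ _ hm1 hm1
    rw [neg_one_mul, neg_neg] at h1
    have h2 := hv_mul (-1) x hm1 hx
    rw [neg_one_mul] at h2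
    omega
  have vadd0 : ∀ (M : ℤ) (x y : L), (x = 0 ∨ M ≤ v x) → (y = 0 ∨ M ≤ v y) →
      (x + y = 0 ∨ M ≤ v (x + y)) := by
    intro M x y hx hy
    by_cases hx0 : x = 0
    · subst hx0; simpa using hy
    by_cases hy0 : y = 0
    · subst hy0; simpa using hx
    by_cases h0 : x + y = 0
    · exact Or.inl h0
    right
    have hmin := hv_add x y hx0 hy0 h0
    have hvx : M ≤ v x := hx.resolve_left hx0
    have hvy : M ≤ v y := hy.resolve_left hy0
    exact le_trans (le_min hvx hvy) hmin
  have vneg0 : ∀ (M : ℤ) (z : L), (z = 0 ∨ M ≤ v z) → (-z = 0 ∨ M ≤ v (-z)) := by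
    intro M z h
    by_cases h0 : z = 0
    · left; rw [h0, neg_zero]
    · right; rw [vneg z h0]; exact h.resolve_left h0
  have vsum : ∀ (M : ℤ) (F : Finset ℕ) (f : ℕ → L),
      (∀ n ∈ F, f n = 0 ∨ M ≤ v (f n)) →
      ((∑ n ∈ F, f n) = 0 ∨ M ≤ v (∑ n ∈ F, f n)) := by
    intro M F f
    induction F using Finset.cons_induction with
    | empty => intro _; simp
    | cons a F ha ih =>
      intro h
      rw [Finset.sum_cons]
      exact vadd0 M _ _ (h a (by simp)) (ih fun n hn => h n (by simp [hn]))
  have htspow : (t : L) ^ s ≠ 0 := zpow_ne_zero _ ht0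
  have vtpown : ∀ n : ℕ, v (t ^ n) = n := by
    intro n
    induction n with
    | zero => simpa using v1
    | succ n ih =>
      rw [pow_succ, hv_mul _ _ (pow_ne_zero _ ht0) ht0, ih, ht1]
      push_cast; ring
  have vtpow : v (t ^ s) = s := by
    obtain ⟨n, rfl⟩ : ∃ n : ℕ, s = (n : ℤ) := ⟨s.toNat, (Int.toNat_of_nonneg hs.le).symm⟩
    rw [zpow_natCast, vtpown]
  have hσ0 : ∀ x : L, σ x = 0 ↔ x = 0 := by
    intro x
    constructor
    · intro h; exact σ.injective (by simpa using h)
    · rintro rfl; exact map_zero σ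
  -- additivity of Φ
  have hΦadd : ∀ a b : Fin r → L, Φ (a + b) = Φ a + Φ b := by
    intro a b; funext i
    rw [Pi.add_apply, hΦ, hΦ, hΦ]
    split_ifs with h
    · rw [Pi.add_apply, map_add, mul_add]
    · rw [Pi.add_apply, map_add]
  have hΦsub : ∀ a b : Fin r → L, Φ (a - b) = Φ a - Φ b := by
    intro a b
    have h1 : Φ ((a - b) + b) = Φ (a - b) + Φ b := hΦadd _ _
    have h2 : (a - b) + b = a := by abel
    rw [h2] at h1
    rw [h1]; abel
  -- Φ preserves lower bounds on valuations
  have hAΦ : ∀ (M : ℤ) (z : Fin r → L), (∀ i, z i = 0 ∨ M ≤ v (z i)) →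
      ∀ i, Φ z i = 0 ∨ M ≤ v (Φ z i) := by
    intro M z hz i
    rw [hΦ]
    split_ifs with h
    · by_cases h0 : z (⟨r - 1, by omega⟩ : Fin r) = 0
      · left; rw [h0, map_zero, mul_zero]
      · right
        have hσne : σ (z (⟨r - 1, by omega⟩ : Fin r)) ≠ 0 := by
          rw [Ne, hσ0]; exact h0
        rw [hv_mul _ _ htspow hσne, vtpow, hσv _ h0]
        have := (hz _).resolve_left h0
        omega
    · by_cases h0 : z (⟨(i : ℕ) - 1, by omega⟩ : Fin r) = 0
      · left; rw [h0, map_zero]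
      · right; rw [hσv _ h0]; exact (hz _).resolve_left h0
  have hAΦn : ∀ (m : ℕ) (M : ℤ) (z : Fin r → L), (∀ i, z i = 0 ∨ M ≤ v (z i)) →
      ∀ i, Φ^[m] z i = 0 ∨ M ≤ v (Φ^[m] z i) := by
    intro m
    induction m with
    | zero => intro M z hz; simpa using hz
    | succ m ih =>
      intro M z hz i
      rw [Function.iterate_succ_apply']
      exact hAΦ M _ (ih M z hz) i
  -- after r steps valuations grow by s
  have hgrow1 : ∀ (M : ℤ) (z : Fin r → L), (∀ i, z i = 0 ∨ M ≤ v (z i)) →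
      ∀ i, Φ^[r] z i = 0 ∨ M + s ≤ v (Φ^[r] z i) := by
    intro M z hz
    have key : ∀ k, k ≤ r → ∀ i : Fin r,
        Φ^[k] z i = 0 ∨
          (if (i : ℕ) < k then M + s ≤ v (Φ^[k] z i) else M ≤ v (Φ^[k] z i)) := by
      intro k
      induction k with
      | zero => intro _ i; simpa using hz i
      | succ k ih =>
        intro hk i
        have ihk := ih (by omega)
        rw [Function.iterate_succ_apply', hΦ]
        split_ifs with h1 h2
        · -- i = 0, goal M + s bound
          by_cases h0 : Φ^[k] z (⟨r - 1, by omega⟩ : Fin r) = 0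
          · left; rw [h0, map_zero, mul_zero]
          · right
            have hσne : σ (Φ^[k] z (⟨r - 1, by omega⟩ : Fin r)) ≠ 0 := by
              rw [Ne, hσ0]; exact h0
            rw [hv_mul _ _ htspow hσne, vtpow, hσv _ h0]
            have hh := (ihk (⟨r - 1, by omega⟩ : Fin r)).resolve_left h0
            split_ifs at hh with hc
            · omega
            · omega
        · exact absurd h2 (by omega)
        · -- i ≠ 0, i < k+1, so i-1 < k
          by_cases h0 : Φ^[k] z (⟨(i : ℕ) - 1, by omega⟩ : Fin r) = 0
          · left; rw [h0, map_zero]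
          · right
            rw [hσv _ h0]
            have hh := (ihk (⟨(i : ℕ) - 1, by omega⟩ : Fin r)).resolve_left h0
            have hlt : (((⟨(i : ℕ) - 1, by omega⟩ : Fin r)) : ℕ) < k := by
              simp only [Fin.val_mk]; omega
            rw [if_pos hlt] at hh
            exact hh
        · -- i ≠ 0, ¬(i < k+1), so ¬(i-1 < k)
          by_cases h0 : Φ^[k] z (⟨(i : ℕ) - 1, by omega⟩ : Fin r) = 0
          · left; rw [h0, map_zero]
          · right
            rw [hσv _ h0]
            have hh := (ihk (⟨(i : ℕ) - 1, by omega⟩ : Fin r)).resolve_left h0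
            have hlt : ¬ (((⟨(i : ℕ) - 1, by omega⟩ : Fin r)) : ℕ) < k := by
              simp only [Fin.val_mk]; omega
            rw [if_neg hlt] at hh
            exact hh
    intro i
    have := key r le_rfl i
    rw [if_pos i.isLt] at this
    exact this
  have hgrowk : ∀ (M : ℤ) (z : Fin r → L), (∀ i, z i = 0 ∨ M ≤ v (z i)) →
      ∀ k : ℕ, ∀ i, Φ^[r * k] z i = 0 ∨ M + s * k ≤ v (Φ^[r * k] z i) := by
    intro M z hz k
    induction k with
    | zero => simpa using hz
    | succ k ih =>
      have hdec : r * (k + 1) = r + r * k := by ring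
      intro i
      rw [hdec, Function.iterate_add_apply]
      rcases hgrow1 (M + s * k) (Φ^[r * k] z) ih i with h | h
      · exact Or.inl h
      · right; push_cast; push_cast at h; linarith
  -- eventual largeness
  have hbig : ∀ (z : Fin r → L) (M0 : ℤ), (∀ i, z i = 0 ∨ M0 ≤ v (z i)) →
      ∀ M : ℤ, ∃ N : ℕ, ∀ n ≥ N, ∀ i, Φ^[n] z i = 0 ∨ M ≤ v (Φ^[n] z i) := by
    intro z M0 hz M
    set k : ℕ := (M - M0).toNat with hk
    refine ⟨r * k, fun n hn i => ?_⟩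
    have hdecomp : Φ^[n] z = Φ^[n % r] (Φ^[r * (n / r)] z) := by
      rw [← Function.iterate_add_apply]
      congr 1
      exact (Nat.mod_add_div n r).symm
    rw [hdecomp]
    have h1 := hgrowk M0 z hz (n / r)
    have h2 := hAΦn (n % r) (M0 + s * (n / r : ℕ)) _ h1
    have hkle : (k : ℤ) ≤ ((n / r : ℕ) : ℤ) := by
      have : k ≤ n / r := (Nat.le_div_iff_mul_le (by omega)).mpr (by rw [Nat.mul_comm]; exact hn)
      exact_mod_cast this
    have hMle : M ≤ M0 + s * ((n / r : ℕ) : ℤ) := by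
      have e1 : M - M0 ≤ (k : ℤ) := Int.self_le_toNat _
      have e2 : (k : ℤ) ≤ s * k := le_mul_of_one_le_left (by positivity) (by omega)
      have e3 : s * (k : ℤ) ≤ s * ((n / r : ℕ) : ℤ) := mul_le_mul_of_nonneg_left hkle hs.le
      linarith
    rcases h2 i with h | h
    · exact Or.inl h
    · exact Or.inr (le_trans hMle h)
  -- main existence statement
  have main : ∀ y : Fin r → L, ∃ x : Fin r → L,
      (∀ i : Fin r, ∀ M : ℤ, ∃ N₀ : ℕ, ∀ N ≥ N₀,
        (∑ n ∈ Finset.range N, Φ^[n] y i) - x i = 0 ∨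
          M ≤ v ((∑ n ∈ Finset.range N, Φ^[n] y i) - x i)) ∧
      x - Φ x = y := by
    intro y
    haveI : Nonempty (Fin r) := ⟨⟨0, by omega⟩⟩
    obtain ⟨M0, hM0⟩ : ∃ M0 : ℤ, ∀ i, y i = 0 ∨ M0 ≤ v (y i) :=
      ⟨Finset.univ.inf' Finset.univ_nonempty (fun i => v (y i)),
        fun i => Or.inr (Finset.inf'_le _ (Finset.mem_univ i))⟩
    have hCauchy : ∀ i : Fin r, ∀ M : ℤ, ∃ N : ℕ, ∀ a ≥ N, ∀ b ≥ N,
        (∑ n ∈ Finset.range a, Φ^[n] y i) - (∑ n ∈ Finset.range b, Φ^[n] y i) = 0 ∨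
        M ≤ v ((∑ n ∈ Finset.range a, Φ^[n] y i) - (∑ n ∈ Finset.range b, Φ^[n] y i)) := by
      intro i M
      obtain ⟨N, hN⟩ := hbig y M0 hM0 M
      refine ⟨N, fun a ha b hb => ?_⟩
      have key : ∀ a b : ℕ, N ≤ b → b ≤ a →
          (∑ n ∈ Finset.range a, Φ^[n] y i) - (∑ n ∈ Finset.range b, Φ^[n] y i) = 0 ∨
          M ≤ v ((∑ n ∈ Finset.range a, Φ^[n] y i) - (∑ n ∈ Finset.range b, Φ^[n] y i)) := by
        intro a b hbN hba
        rw [← Finset.sum_Ico_eq_sub _ hba]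
        refine vsum M (Finset.Ico b a) _ (fun n hn => ?_)
        have hnN : N ≤ n := le_trans hbN (Finset.mem_Ico.mp hn).1
        exact hN n hnN i
      rcases le_total b a with h | h
      · exact key a b hb h
      · by_cases h0 : (∑ n ∈ Finset.range b, Φ^[n] y i) - (∑ n ∈ Finset.range a, Φ^[n] y i) = 0
        · left
          rw [show (∑ n ∈ Finset.range a, Φ^[n] y i) - (∑ n ∈ Finset.range b, Φ^[n] y i)
              = -((∑ n ∈ Finset.range b, Φ^[n] y i) - (∑ n ∈ Finset.range a, Φ^[n] y i)) by ring,
            h0, neg_zero]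
        · rcases key b a ha h with h1 | h1
          · exact absurd h1 h0
          · right
            rw [show (∑ n ∈ Finset.range a, Φ^[n] y i) - (∑ n ∈ Finset.range b, Φ^[n] y i)
                = -((∑ n ∈ Finset.range b, Φ^[n] y i) - (∑ n ∈ Finset.range a, Φ^[n] y i)) by ring,
              vneg _ h0]
            exact h1
    have hlim := fun i : Fin r => hcomp (fun N => ∑ n ∈ Finset.range N, Φ^[n] y i) (hCauchy i)
    choose x hx using hlim
    refine ⟨x, hx, ?_⟩
    -- telescoping identity
    set S : ℕ → (Fin r → L) := fun N => ∑ n ∈ Finset.range N, Φ^[n] y with hSdef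
    have hSapp : ∀ N j, S N j = ∑ n ∈ Finset.range N, Φ^[n] y j := by
      intro N j
      rw [hSdef]
      exact Finset.sum_apply _ _ _
    have hkey : ∀ N, S N - Φ (S N) = y - Φ^[N] y := by
      intro N
      have h1 : Φ (S N) = ∑ n ∈ Finset.range N, Φ^[n + 1] y := by
        calc Φ (S N) = ∑ n ∈ Finset.range N, Φ (Φ^[n] y) :=
              map_sum (AddMonoidHom.mk' Φ hΦadd) _ _
          _ = ∑ n ∈ Finset.range N, Φ^[n + 1] y := by
              refine Finset.sum_congr rfl (fun n _ => ?_)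
              rw [Function.iterate_succ_apply']
      rw [h1, hSdef]
      simp only []
      rw [← Finset.sum_sub_distrib, Finset.sum_range_sub' (fun n => Φ^[n] y) N]
      simp
    have hfinal : ∀ i : Fin r, (x - Φ x - y) i = 0 := by
      intro i
      have hM : ∀ M : ℤ, (x - Φ x - y) i = 0 ∨ M ≤ v ((x - Φ x - y) i) := by
        intro M
        choose N₁ hN₁ using fun j => hx j M
        obtain ⟨N₂, hN₂⟩ := hbig y M0 hM0 M
        set N : ℕ := max (Finset.univ.sup N₁) N₂ with hNdef
        have hid : x - Φ x - y = (x - S N) - Φ^[N] y + Φ (S N - x) := by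
          have h1 : Φ (S N - x) = Φ (S N) - Φ x := hΦsub _ _
          have h2 : Φ^[N] y = y - (S N - Φ (S N)) := by rw [hkey N]; abel
          rw [h1, h2]; abel
        have hb1 : ∀ j, (S N - x) j = 0 ∨ M ≤ v ((S N - x) j) := by
          intro j
          have hj : N₁ j ≤ N :=
            le_trans (Finset.le_sup (Finset.mem_univ j)) (le_max_left _ _)
          have hh := hN₁ j N hj
          rw [Pi.sub_apply, hSapp]
          exact hh
        have hb1' : (x - S N) i = 0 ∨ M ≤ v ((x - S N) i) := by
          have he : (x - S N) i = -((S N - x) i) := by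
            simp only [Pi.sub_apply]; ring
          rw [he]
          exact vneg0 M _ (hb1 i)
        have hb2 : Φ^[N] y i = 0 ∨ M ≤ v (Φ^[N] y i) :=
          hN₂ N (le_max_right _ _) i
        have hb3 : Φ (S N - x) i = 0 ∨ M ≤ v (Φ (S N - x) i) := hAΦ M _ hb1 i
        rw [hid]
        have he2 : ((x - S N) - Φ^[N] y + Φ (S N - x)) i
            = ((x - S N) i + (-(Φ^[N] y i))) + Φ (S N - x) i := by
          simp only [Pi.add_apply, Pi.sub_apply]; ring
        rw [he2]
        exact vadd0 M _ _ (vadd0 M _ _ hb1' (vneg0 M _ hb2)) hb3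
      by_contra hne
      rcases hM (v ((x - Φ x - y) i) + 1) with h | h
      · exact hne h
      · omega
    funext i
    have h := hfinal i
    rw [Pi.sub_apply] at h
    exact sub_eq_zero.mp h
  refine ⟨main, ?_, fun y => ?_⟩
  · -- injective
    intro a b hab
    simp only at hab
    have h2 : a - b = Φ a - Φ b := sub_eq_sub_iff_sub_eq_sub.mp hab
    have hd : Φ (a - b) = a - b := by rw [hΦsub, ← h2]
    rw [← sub_eq_zero]
    by_contra hd0
    have hex : ∃ i, (a - b) i ≠ 0 := by
      by_contra hno
      push_neg at hno
      exact hd0 (funext fun i => by simpa using hno i)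
    obtain ⟨i0, hi0⟩ := hex
    set T := Finset.univ.filter (fun i => (a - b) i ≠ 0) with hT
    have hTne : T.Nonempty := ⟨i0, by rw [hT, Finset.mem_filter]; exact ⟨Finset.mem_univ i0, hi0⟩⟩
    obtain ⟨j, hjT, hjmin⟩ := Finset.exists_min_image T (fun i => v ((a - b) i)) hTne
    have hdj : (a - b) j ≠ 0 := (Finset.mem_filter.mp hjT).2
    have hA : ∀ i, (a - b) i = 0 ∨ v ((a - b) j) ≤ v ((a - b) i) := by
      intro i
      by_cases h0 : (a - b) i = 0
      · exact Or.inl h0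
      · exact Or.inr (hjmin i (Finset.mem_filter.mpr ⟨Finset.mem_univ i, h0⟩))
    have hfix : ∀ n, Φ^[n] (a - b) = a - b := by
      intro n
      induction n with
      | zero => rfl
      | succ n ih => rw [Function.iterate_succ_apply', ih, hd]
    have := hgrow1 _ _ hA j
    rw [hfix r] at this
    rcases this with h | h
    · exact hdj h
    · omega
  · -- surjective
    obtain ⟨x, _, hxy⟩ := main y
    exact ⟨x, hxy⟩
end

section
/- Let r ≥ 1 and let s be a nonzero integer. Define Φ : L^r → L^r by Φ(x_1, …, x_r) = (t^s·σ(x_r), σ(x_1), …, σ(x_{r−1})) and set f = Φ − id. Then: if s > 0, the image of the standard lattice satisfies f(𝒪_L^r) = 𝒪_L^r; and if s < 0, then f(𝒪_L^r) = (t^s𝒪_L) × 𝒪_L^{r−1} (the set of tuples whose first coordinate lies in t^s𝒪_L and whose remaining coordinates lie in 𝒪_L). -/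
open Pointwise


section Aux

variable {L : Type*} [Field L]

lemma aux_v1 (v : L → ℤ)
    (hv_mul : ∀ x y : L, x ≠ 0 → y ≠ 0 → v (x * y) = v x + v y) : v 1 = 0 := by
  have h := hv_mul 1 1 one_ne_zero one_ne_zero
  simp only [mul_one] at h
  omega

lemma aux_vneg (v : L → ℤ)
    (hv_mul : ∀ x y : L, x ≠ 0 → y ≠ 0 → v (x * y) = v x + v y)
    {x : L} (hx : x ≠ 0) : v (-x) = v x := by
  have h1 := aux_v1 v hv_mul
  have hm1 : v (-1 : L) = 0 := by
    have h := hv_mul (-1 : L) (-1) (by norm_num) (by norm_num)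
    norm_num at h
    omega
  have h := hv_mul (-1 : L) x (by norm_num) hx
  rw [neg_one_mul] at h
  omega

lemma aux_vzpow (v : L → ℤ) (t : L)
    (hv_mul : ∀ x y : L, x ≠ 0 → y ≠ 0 → v (x * y) = v x + v y)
    (ht0 : t ≠ 0) (ht1 : v t = 1) : ∀ n : ℤ, v (t ^ n) = n := by
  have hnat : ∀ k : ℕ, v (t ^ k) = k := by
    intro k
    induction k with
    | zero => simpa using aux_v1 v hv_mul
    | succ k ih =>
      rw [pow_succ, hv_mul _ _ (pow_ne_zero _ ht0) ht0, ih, ht1]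
      push_cast; ring
  intro n
  rcases n with k | k
  · rw [Int.ofNat_eq_coe, zpow_natCast, hnat]
  · rw [zpow_negSucc]
    have h := hv_mul (t ^ (k + 1)) (t ^ (k + 1))⁻¹ (pow_ne_zero _ ht0)
      (inv_ne_zero (pow_ne_zero _ ht0))
    rw [mul_inv_cancel₀ (pow_ne_zero _ ht0), aux_v1 v hv_mul, hnat] at h
    rw [Int.negSucc_eq]
    omega

lemma aux_padd (v : L → ℤ)
    (hv_add : ∀ x y : L, x ≠ 0 → y ≠ 0 → x + y ≠ 0 → min (v x) (v y) ≤ v (x + y))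
    {M : ℤ} {x y : L} (hx : x = 0 ∨ M ≤ v x) (hy : y = 0 ∨ M ≤ v y) :
    x + y = 0 ∨ M ≤ v (x + y) := by
  by_cases h0 : x + y = 0
  · exact Or.inl h0
  by_cases hx0 : x = 0
  · subst hx0; rw [zero_add] at h0 ⊢; tauto
  by_cases hy0 : y = 0
  · subst hy0; rw [add_zero] at h0 ⊢; tauto
  right
  have h := hv_add x y hx0 hy0 h0
  rcases hx with rfl | hx
  · exact absurd rfl hx0
  rcases hy with rfl | hy
  · exact absurd rfl hy0
  exact le_trans (le_min hx hy) h

lemma aux_pneg (v : L → ℤ)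
    (hv_mul : ∀ x y : L, x ≠ 0 → y ≠ 0 → v (x * y) = v x + v y)
    {M : ℤ} {x : L} (hx : x = 0 ∨ M ≤ v x) : -x = 0 ∨ M ≤ v (-x) := by
  by_cases hx0 : x = 0
  · left; rw [hx0, neg_zero]
  · right
    rcases hx with rfl | hx
    · exact absurd rfl hx0
    · rwa [aux_vneg v hv_mul hx0]

lemma aux_pmono (v : L → ℤ) {M M' : ℤ} (h : M' ≤ M) {x : L}
    (hx : x = 0 ∨ M ≤ v x) : x = 0 ∨ M' ≤ v x :=
  hx.imp id (fun h2 => le_trans h h2)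

lemma aux_pzero (v : L → ℤ) {x : L} (h : ∀ M : ℤ, x = 0 ∨ M ≤ v x) : x = 0 := by
  by_contra hx
  rcases h (v x + 1) with h0 | h0
  · exact hx h0
  · omega

lemma aux_iter_sub (σ : L ≃+* L) : ∀ (k : ℕ) (a b : L),
    (⇑σ)^[k] (a - b) = (⇑σ)^[k] a - (⇑σ)^[k] b := by
  intro k
  induction k with
  | zero => intro a b; simp
  | succ k ih =>
    intro a b
    simp only [Function.iterate_succ_apply', ih, map_sub]

lemma aux_iter_v (v : L → ℤ) (σ : L ≃+* L)
    (hσv : ∀ x : L, x ≠ 0 → v (σ x) = v x) :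
    ∀ (k : ℕ) (x : L), x ≠ 0 → (⇑σ)^[k] x ≠ 0 ∧ v ((⇑σ)^[k] x) = v x := by
  intro k
  induction k with
  | zero => intro x hx; exact ⟨hx, rfl⟩
  | succ k ih =>
    intro x hx
    obtain ⟨h1, h2⟩ := ih x hx
    rw [Function.iterate_succ_apply']
    constructor
    · intro h
      apply h1
      have := congrArg σ.symm h
      simpa using this
    · rw [hσv _ h1, h2]

lemma aux_fixed (v : L → ℤ)
    (hv_mul : ∀ x y : L, x ≠ 0 → y ≠ 0 → v (x * y) = v x + v y)
    (hv_add : ∀ x y : L, x ≠ 0 → y ≠ 0 → x + y ≠ 0 → min (v x) (v y) ≤ v (x + y))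
    (O : Subring L) (hO : ∀ x : L, x ∈ O ↔ x = 0 ∨ 0 ≤ v x)
    (hcomp : ∀ x : ℕ → L,
      (∀ M : ℤ, ∃ N : ℕ, ∀ a ≥ N, ∀ b ≥ N, x a - x b = 0 ∨ M ≤ v (x a - x b)) →
      ∃ l : L, ∀ M : ℤ, ∃ N : ℕ, ∀ a ≥ N, x a - l = 0 ∨ M ≤ v (x a - l))
    (g : L → L) (hgO : ∀ z ∈ O, g z ∈ O)
    (hgc : ∀ z w : L, ∀ M : ℤ, (z - w = 0 ∨ M ≤ v (z - w)) →
      (g z - g w = 0 ∨ M + 1 ≤ v (g z - g w))) :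
    ∃ z ∈ O, g z = z := by
  obtain ⟨x, hx0, hxs⟩ : ∃ x : ℕ → L, x 0 = 0 ∧ ∀ n, x (n + 1) = g (x n) :=
    ⟨fun n => g^[n] 0, rfl, fun n => Function.iterate_succ_apply' g n 0⟩
  have hxO : ∀ n, x n ∈ O := by
    intro n
    induction n with
    | zero => rw [hx0]; exact O.zero_mem
    | succ n ih => rw [hxs]; exact hgO _ ih
  have hstep : ∀ n : ℕ, x (n + 1) - x n = 0 ∨ (n : ℤ) ≤ v (x (n + 1) - x n) := by
    intro n
    induction n with
    | zero =>
      rw [hxs, hx0, sub_zero]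
      exact_mod_cast (hO _).mp (hgO _ O.zero_mem)
    | succ n ih =>
      have h := hgc (x (n + 1)) (x n) n ih
      rw [← hxs (n + 1), ← hxs n] at h
      push_cast
      exact h
  have hchain : ∀ b k : ℕ, x (b + k) - x b = 0 ∨ (b : ℤ) ≤ v (x (b + k) - x b) := by
    intro b k
    induction k with
    | zero => left; simp
    | succ k ih =>
      have h1 : x (b + (k + 1)) - x b = (x (b + k + 1) - x (b + k)) + (x (b + k) - x b) := by
        ring_nf
      rw [h1]
      exact aux_padd v hv_add (aux_pmono v (by push_cast; omega) (hstep (b + k))) ih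
  have hcauchy : ∀ M : ℤ, ∃ N : ℕ, ∀ a ≥ N, ∀ b ≥ N, x a - x b = 0 ∨ M ≤ v (x a - x b) := by
    intro M
    refine ⟨M.toNat, fun a ha b hb => ?_⟩
    rcases le_total b a with h | h
    · obtain ⟨k, rfl⟩ := Nat.exists_eq_add_of_le h
      exact aux_pmono v (by omega) (hchain b k)
    · obtain ⟨k, rfl⟩ := Nat.exists_eq_add_of_le h
      have := aux_pneg v hv_mul (aux_pmono v (by omega : M ≤ (a:ℤ)) (hchain a k))
      rwa [neg_sub] at this
  obtain ⟨l, hl⟩ := hcomp x hcauchy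
  have hlO : l ∈ O := by
    obtain ⟨N, hN⟩ := hl 0
    have h1 := hN N le_rfl
    have h2 : l = x N - (x N - l) := by ring
    rw [h2]
    exact O.sub_mem (hxO N) ((hO _).mpr h1)
  refine ⟨l, hlO, ?_⟩
  have : ∀ M : ℤ, g l - l = 0 ∨ M ≤ v (g l - l) := by
    intro M
    obtain ⟨N, hN⟩ := hl M
    have hA := hN N le_rfl
    have hB := hN (N + 1) (by omega)
    have hlx : l - x N = 0 ∨ M ≤ v (l - x N) := by
      have := aux_pneg v hv_mul hA
      rwa [neg_sub] at this
    have hC := aux_pmono v (by omega : M ≤ M + 1) (hgc l (x N) M hlx)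
    have heq : g l - l = (g l - g (x N)) + (x (N + 1) - l) := by
      rw [hxs]; ring
    rw [heq]
    exact aux_padd v hv_add hC hB
  exact sub_eq_zero.mp (aux_pzero v this)

end Aux
section Aux2

variable {L : Type*} [Field L]

lemma aux_solve (v : L → ℤ) (t : L)
    (hv_mul : ∀ x y : L, x ≠ 0 → y ≠ 0 → v (x * y) = v x + v y)
    (hv_add : ∀ x y : L, x ≠ 0 → y ≠ 0 → x + y ≠ 0 → min (v x) (v y) ≤ v (x + y))
    (ht0 : t ≠ 0) (ht1 : v t = 1)
    (O : Subring L) (hO : ∀ x : L, x ∈ O ↔ x = 0 ∨ 0 ≤ v x)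
    (hcomp : ∀ x : ℕ → L,
      (∀ M : ℤ, ∃ N : ℕ, ∀ a ≥ N, ∀ b ≥ N, x a - x b = 0 ∨ M ≤ v (x a - x b)) →
      ∃ l : L, ∀ M : ℤ, ∃ N : ℕ, ∀ a ≥ N, x a - l = 0 ∨ M ≤ v (x a - l))
    (σ : L ≃+* L) (hσv : ∀ x : L, x ≠ 0 → v (σ x) = v x)
    (r : ℕ) (hr : 1 ≤ r) (s : ℤ)
    (Y : ℕ → L) (hY : ∀ k, 1 ≤ k → Y k ∈ O)
    (hcase : (0 < s ∧ Y 0 ∈ O) ∨ (s < 0 ∧ ∃ o ∈ O, t ^ s * o = Y 0)) :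
    ∃ Z : ℕ → L, (∀ k, Z k ∈ O) ∧ (∀ k, Z (k + 1) = σ (Z k) - Y (k + 1)) ∧
      t ^ s * σ (Z (r - 1)) - Z 0 = Y 0 := by
  have hO' : ∀ x : L, (x = 0 ∨ 0 ≤ v x) → x ∈ O := fun x h => (hO x).mpr h
  have hvt := aux_vzpow v t hv_mul ht0 ht1
  have hts : ∀ n : ℤ, (t : L) ^ n ≠ 0 := fun n => zpow_ne_zero n ht0
  have htsO : ∀ n : ℤ, 0 ≤ n → t ^ n ∈ O := fun n hn => hO' _ (Or.inr (by rw [hvt]; exact hn))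
  have hσ0 : ∀ x : L, σ x = 0 → x = 0 := by
    intro x h
    have := congrArg σ.symm h
    simpa using this
  have hσO : ∀ x ∈ O, σ x ∈ O := by
    intro x hx
    by_cases hx0 : x = 0
    · rw [hx0, map_zero]; exact O.zero_mem
    · apply hO'
      right
      rw [hσv x hx0]
      rcases (hO x).mp hx with rfl | h
      · exact absurd rfl hx0
      · exact h
  have hσsymmv : ∀ x : L, x ≠ 0 → v (σ.symm x) = v x := by
    intro x hx
    have h0 : σ.symm x ≠ 0 := by
      intro h
      apply hx
      have := congrArg σ h
      simpa using this
    have := hσv (σ.symm x) h0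
    rw [σ.apply_symm_apply] at this
    exact this.symm
  have hσsymm0 : ∀ x : L, σ.symm x = 0 → x = 0 := by
    intro x h
    have := congrArg σ h
    simpa using this
  have hσsymmO : ∀ x ∈ O, σ.symm x ∈ O := by
    intro x hx
    by_cases hx0 : x = 0
    · rw [hx0, map_zero]; exact O.zero_mem
    · apply hO'
      right
      rw [hσsymmv x hx0]
      rcases (hO x).mp hx with rfl | h
      · exact absurd rfl hx0
      · exact h
  have hiter := aux_iter_v v σ hσv
  have hitersymm := aux_iter_v v (σ.symm) hσsymmv
  have hitersymmO : ∀ (k : ℕ), ∀ x ∈ O, (⇑σ.symm)^[k] x ∈ O := by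
    intro k
    induction k with
    | zero => intro x hx; exact hx
    | succ k ih =>
      intro x hx
      rw [Function.iterate_succ_apply']
      exact hσsymmO _ (ih x hx)
  have hcancel : ∀ (k : ℕ) (x : L), (⇑σ)^[k] ((⇑σ.symm)^[k] x) = x := by
    intro k
    induction k with
    | zero => intro x; rfl
    | succ k ih =>
      intro x
      rw [Function.iterate_succ_apply (⇑σ.symm), Function.iterate_succ_apply' (⇑σ), ih,
        σ.apply_symm_apply]
  -- the recursion
  obtain ⟨W, hW0, hWs⟩ : ∃ W : L → ℕ → L, (∀ z, W z 0 = z) ∧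
      (∀ z k, W z (k + 1) = σ (W z k) - Y (k + 1)) :=
    ⟨fun z k => Nat.rec z (fun k ih => σ ih - Y (k + 1)) k, fun _ => rfl, fun _ _ => rfl⟩
  have hWO : ∀ z ∈ O, ∀ k, W z k ∈ O := by
    intro z hz k
    induction k with
    | zero => rw [hW0]; exact hz
    | succ k ih =>
      rw [hWs]
      exact O.sub_mem (hσO _ ih) (hY (k + 1) (by omega))
  have hWsub : ∀ z w : L, ∀ k : ℕ, W z k - W w k = (⇑σ)^[k] (z - w) := by
    intro z w k
    induction k with
    | zero => rw [hW0, hW0]; rfl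
    | succ k ih =>
      rw [hWs, hWs, sub_sub_sub_cancel_right, ← map_sub, ih,
        Function.iterate_succ_apply']
  have hr' : r - 1 + 1 = r := by omega
  have hWsub' : ∀ z w : L, σ (W z (r - 1)) - σ (W w (r - 1)) = (⇑σ)^[r] (z - w) := by
    intro z w
    rw [← map_sub, hWsub]
    conv_rhs => rw [← hr']
    rw [Function.iterate_succ_apply']
  rcases hcase with ⟨hspos, hY0⟩ | ⟨hsneg, o, hoO, ho⟩
  · -- s > 0 : g is a contraction
    set g : L → L := fun z => t ^ s * σ (W z (r - 1)) - Y 0 with hg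
    have hgdiff : ∀ z w : L, g z - g w = t ^ s * (⇑σ)^[r] (z - w) := by
      intro z w
      simp only [hg]
      rw [← hWsub' z w]
      ring
    have hgO : ∀ z ∈ O, g z ∈ O := by
      intro z hz
      exact O.sub_mem (O.mul_mem (htsO s (by omega)) (hσO _ (hWO z hz (r - 1)))) hY0
    have hgc : ∀ z w : L, ∀ M : ℤ, (z - w = 0 ∨ M ≤ v (z - w)) →
        (g z - g w = 0 ∨ M + 1 ≤ v (g z - g w)) := by
      intro z w M hzw
      rcases hzw with h | h
      · left; rw [hgdiff, h]; simp
      · by_cases h0 : z - w = 0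
        · left; rw [hgdiff, h0]; simp
        · right
          obtain ⟨h1, h2⟩ := hiter r (z - w) h0
          rw [hgdiff, hv_mul _ _ (hts s) h1, hvt, h2]
          omega
    obtain ⟨z, hzO, hzfix⟩ := aux_fixed v hv_mul hv_add O hO hcomp g hgO hgc
    refine ⟨W z, hWO z hzO, hWs z, ?_⟩
    rw [hW0]
    have : t ^ s * σ (W z (r - 1)) - Y 0 = z := hzfix
    linear_combination this
  · -- s < 0 : use the inverse map
    have htt : t ^ (-s) * t ^ s = 1 := by
      rw [← zpow_add₀ ht0]
      simp
    set D : L := σ (W 0 (r - 1)) - o with hD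
    have hDO : D ∈ O := O.sub_mem (hσO _ (hWO 0 O.zero_mem (r - 1))) hoO
    set h : L → L := fun z => (⇑σ.symm)^[r] (t ^ (-s) * z - D) with hh
    have hhO : ∀ z ∈ O, h z ∈ O := by
      intro z hz
      exact hitersymmO r _ (O.sub_mem (O.mul_mem (htsO (-s) (by omega)) hz) hDO)
    have hhdiff : ∀ z w : L, h z - h w = (⇑σ.symm)^[r] (t ^ (-s) * (z - w)) := by
      intro z w
      simp only [hh]
      rw [← aux_iter_sub σ.symm]
      ring_nf
    have hhc : ∀ z w : L, ∀ M : ℤ, (z - w = 0 ∨ M ≤ v (z - w)) →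
        (h z - h w = 0 ∨ M + 1 ≤ v (h z - h w)) := by
      intro z w M hzw
      rcases hzw with hzw | hzw
      · left; rw [hhdiff, hzw]; simp
      · by_cases h0 : z - w = 0
        · left; rw [hhdiff, h0]; simp
        · right
          have hne : t ^ (-s) * (z - w) ≠ 0 := mul_ne_zero (hts (-s)) h0
          obtain ⟨h1, h2⟩ := hitersymm r _ hne
          rw [hhdiff, h2, hv_mul _ _ (hts (-s)) h0, hvt]
          omega
    obtain ⟨z, hzO, hzfix⟩ := aux_fixed v hv_mul hv_add O hO hcomp h hhO hhc
    refine ⟨W z, hWO z hzO, hWs z, ?_⟩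
    rw [hW0]
    have e1 : (⇑σ)^[r] z = t ^ (-s) * z - D := by
      have := congrArg ((⇑σ)^[r]) hzfix
      rw [hcancel] at this
      exact this.symm
    have e2 : σ (W z (r - 1)) - σ (W 0 (r - 1)) = (⇑σ)^[r] z := by
      rw [hWsub' z 0, sub_zero]
    rw [hD] at e1
    linear_combination t ^ s * e2 + t ^ s * e1 + z * htt + ho
end Aux2

/-- For a nonzero integer `s`,
`Φ(x_1,…,x_r) = (t^s σ(x_r), σ(x_1), …, σ(x_{r−1}))` on `L^r` (`L` complete) and
`f = Φ − id`: if `s > 0` then `f(𝒪_L^r) = 𝒪_L^r`, and if `s < 0` then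
`f(𝒪_L^r) = (t^s 𝒪_L) × 𝒪_L^{r−1}`. -/
theorem stmt_18 {L : Type*} [Field L] (v : L → ℤ) (t : L)
    (hv_mul : ∀ x y : L, x ≠ 0 → y ≠ 0 → v (x * y) = v x + v y)
    (hv_add : ∀ x y : L, x ≠ 0 → y ≠ 0 → x + y ≠ 0 → min (v x) (v y) ≤ v (x + y))
    (hv_surj : ∀ n : ℤ, ∃ x : L, x ≠ 0 ∧ v x = n)
    (ht0 : t ≠ 0) (ht1 : v t = 1)
    (O : Subring L) (hO : ∀ x : L, x ∈ O ↔ x = 0 ∨ 0 ≤ v x)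
    -- completeness of `L` for the valuation topology (Cauchy sequences converge)
    (hcomp : ∀ x : ℕ → L,
      (∀ M : ℤ, ∃ N : ℕ, ∀ a ≥ N, ∀ b ≥ N, x a - x b = 0 ∨ M ≤ v (x a - x b)) →
      ∃ l : L, ∀ M : ℤ, ∃ N : ℕ, ∀ a ≥ N, x a - l = 0 ∨ M ≤ v (x a - l))
    (σ : L ≃+* L) (hσt : σ t = t) (hσv : ∀ x : L, x ≠ 0 → v (σ x) = v x)
    (r : ℕ) (hr : 1 ≤ r) (s : ℤ) (hs : s ≠ 0)
    (Φ : (Fin r → L) → (Fin r → L))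
    (hΦ : ∀ (x : Fin r → L) (i : Fin r), Φ x i =
      if (i : ℕ) = 0 then t ^ s * σ (x (⟨r - 1, by omega⟩ : Fin r))
      else σ (x (⟨(i : ℕ) - 1, by omega⟩ : Fin r))) :
    (0 < s →
      (fun x : Fin r → L => Φ x - x) '' {x | ∀ i, x i ∈ O} = {x | ∀ i, x i ∈ O}) ∧
    (s < 0 →
      (fun x : Fin r → L => Φ x - x) '' {x | ∀ i, x i ∈ O} =
        {y | y (⟨0, by omega⟩ : Fin r) ∈ t ^ s • (O : Set L) ∧
          ∀ i : Fin r, (i : ℕ) ≠ 0 → y i ∈ O}) := by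
  have hO' : ∀ x : L, (x = 0 ∨ 0 ≤ v x) → x ∈ O := fun x h => (hO x).mpr h
  have hvt := aux_vzpow v t hv_mul ht0 ht1
  have hts : ∀ n : ℤ, (t : L) ^ n ≠ 0 := fun n => zpow_ne_zero n ht0
  have htsO : ∀ n : ℤ, 0 ≤ n → t ^ n ∈ O := fun n hn => hO' _ (Or.inr (by rw [hvt]; exact hn))
  have hσO : ∀ x ∈ O, σ x ∈ O := by
    intro x hx
    by_cases hx0 : x = 0
    · rw [hx0, map_zero]; exact O.zero_mem
    · apply hO'
      right
      rw [hσv x hx0]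
      rcases (hO x).mp hx with rfl | h
      · exact absurd rfl hx0
      · exact h
  -- the key construction, given boundary data
  have key : ∀ y : Fin r → L,
      (∀ k : ℕ, 1 ≤ k → ∀ h : k < r, y ⟨k, h⟩ ∈ O) →
      ((0 < s ∧ y ⟨0, by omega⟩ ∈ O) ∨
        (s < 0 ∧ ∃ o ∈ O, t ^ s * o = y ⟨0, by omega⟩)) →
      ∃ x : Fin r → L, (∀ i, x i ∈ O) ∧ Φ x - x = y := by
    intro y hyk hycase
    obtain ⟨Y, hYdef⟩ : ∃ Y : ℕ → L, ∀ k : ℕ, Y k = if h : k < r then y ⟨k, h⟩ else 0 :=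
      ⟨_, fun _ => rfl⟩
    have hY0 : Y 0 = y ⟨0, by omega⟩ := by rw [hYdef]; simp [Nat.lt_of_lt_of_le Nat.zero_lt_one hr]
    have hY : ∀ k, 1 ≤ k → Y k ∈ O := by
      intro k hk
      rw [hYdef]
      split
      · exact hyk k hk _
      · exact O.zero_mem
    have hcase : (0 < s ∧ Y 0 ∈ O) ∨ (s < 0 ∧ ∃ o ∈ O, t ^ s * o = Y 0) := by
      rw [hY0]; exact hycase
    obtain ⟨Z, hZO, hZs, hZ0⟩ := aux_solve v t hv_mul hv_add ht0 ht1 O hO hcomp σ hσv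
      r hr s Y hY hcase
    refine ⟨fun i => Z i.val, fun i => hZO i.val, ?_⟩
    funext i
    rw [Pi.sub_apply, hΦ]
    by_cases hi : (i : ℕ) = 0
    · rw [if_pos hi]
      have hieq : i = (⟨0, by omega⟩ : Fin r) := by
        apply Fin.ext
        exact hi
      rw [hieq]
      exact hZ0.trans hY0
    · rw [if_neg hi]
      obtain ⟨m, hm⟩ := Nat.exists_eq_succ_of_ne_zero hi
      have h1 : Z (i : ℕ) = σ (Z m) - Y (m + 1) := by rw [hm]; exact hZs m
      have h2 : Y (m + 1) = y i := by
        rw [hYdef]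
        have hlt : m + 1 < r := by have := i.isLt; omega
        rw [dif_pos hlt]
        congr 1
        apply Fin.ext
        show m + 1 = (i : ℕ)
        omega
      have h4 : (i : ℕ) - 1 = m := by omega
      show σ (Z ((i : ℕ) - 1)) - Z (i : ℕ) = y i
      rw [h4, h1, h2]
      ring
  constructor
  · -- s > 0
    intro hspos
    ext y
    simp only [Set.mem_image, Set.mem_setOf_eq]
    constructor
    · rintro ⟨x, hx, rfl⟩
      intro i
      rw [Pi.sub_apply, hΦ]
      split
      · exact O.sub_mem (O.mul_mem (htsO s (by omega)) (hσO _ (hx _))) (hx i)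
      · exact O.sub_mem (hσO _ (hx _)) (hx i)
    · intro hy
      obtain ⟨x, hxO, hxeq⟩ := key y (fun k hk h => hy _) (Or.inl ⟨hspos, hy _⟩)
      exact ⟨x, hxO, hxeq⟩
  · -- s < 0
    intro hsneg
    have htt : t ^ (-s) * t ^ s = 1 := by rw [← zpow_add₀ ht0]; simp
    ext y
    simp only [Set.mem_image, Set.mem_setOf_eq]
    constructor
    · rintro ⟨x, hx, rfl⟩
      constructor
      · rw [Pi.sub_apply, hΦ]
        rw [if_pos rfl]
        rw [Set.mem_smul_set]
        refine ⟨σ (x ⟨r - 1, by omega⟩) - t ^ (-s) * x ⟨0, by omega⟩,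
          O.sub_mem (hσO _ (hx _)) (O.mul_mem (htsO (-s) (by omega)) (hx _)), ?_⟩
        rw [smul_eq_mul]
        linear_combination (- x (⟨0, by omega⟩ : Fin r)) * htt
      · intro i hi
        rw [Pi.sub_apply, hΦ, if_neg hi]
        exact O.sub_mem (hσO _ (hx _)) (hx i)
    · rintro ⟨hy0, hyrest⟩
      rw [Set.mem_smul_set] at hy0
      obtain ⟨o, hoO, ho⟩ := hy0
      rw [smul_eq_mul] at ho
      obtain ⟨x, hxO, hxeq⟩ := key y
        (fun k hk h => hyrest ⟨k, h⟩ (by simp only [Fin.val_mk]; omega))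
        (Or.inr ⟨hsneg, o, hoO, ho⟩)
      exact ⟨x, hxO, hxeq⟩
end
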